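/- arXiv:2505.12829 — 9 statements merged into one kernel-verified Lean document; each statement's English description precedes it below -/
import Mathlib

section
/- Let d and t be positive integers with t ≤ d, and let Z be a subgroup of the symmetric group S_d on {1,…,d} that is (t−1)-transitive and t-homogeneous. Then for every point x ∈ ℝ^d and every real polynomial f in d variables of total degree at most t, (1/|S_d·x|) ∑_{y ∈ S_d·x} f(y) = (1/|Z·x|) ∑_{y ∈ Z·x} f(y), where for a subset Z of S_d the orbit set is Z·x = {(x_{σ(1)},…,x_{σ(d)}) : σ ∈ Z}. -/
/-!
Averaging `V (g • b)` over a finite group gives the average of `V` over the orbit of `b`, since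
every point of the orbit is hit `|Stab b|` times. Hence both sides of the theorem are the values at
`x` of the averages of `rename σ f` over `σ ∈ S_d` and over `σ ∈ Z`; expanding `f` into monomials,
these agree as soon as `Z` and `S_d` have the same orbit on every exponent `α` with `|α| ≤ t`.
If `α` has fewer than `t` nonzero entries, `(t - 1)`-transitivity gives `k`-transitivity for
`k = #supp α`, so `Z` moves `supp α` like any permutation does; otherwise `α` is the indicator of a
`t`-set and `t`-homogeneity suffices.
-/

/-- `Z` is `k`-transitive: `Z` acts transitively on ordered `k`-tuples of
distinct elements of `{1,…,d}` (encoded as embeddings `Fin k ↪ Fin d`). -/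
def IsKTransitive {d : ℕ} (Z : Subgroup (Equiv.Perm (Fin d))) (k : ℕ) : Prop :=
  ∀ a b : Fin k ↪ Fin d, ∃ σ ∈ Z, ∀ i, σ (a i) = b i

/-- `Z` is `k`-homogeneous: `Z` acts transitively on `k`-element subsets of `{1,…,d}`. -/
def IsKHomogeneous {d : ℕ} (Z : Subgroup (Equiv.Perm (Fin d))) (k : ℕ) : Prop :=
  ∀ A B : Finset (Fin d), A.card = k → B.card = k → ∃ σ ∈ Z, A.image σ = B

/-- The orbit set `Z·x = {(x_{σ(1)},…,x_{σ(d)}) : σ ∈ Z}` as a finite set. -/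
noncomputable def permOrbit {d : ℕ} (Z : Set (Equiv.Perm (Fin d))) (x : Fin d → ℝ) :
    Finset (Fin d → ℝ) :=
  (Set.Finite.image (fun σ : Equiv.Perm (Fin d) => x ∘ ⇑σ) (Set.toFinite Z)).toFinset

open Finset MulAction

namespace MulAction

variable {G β M : Type*} [Group G] [Fintype G] [MulAction G β] [DecidableEq β]

theorem sum_smul_eq_card_stabilizer_nsmul_sum_orbit [AddCommMonoid M] (b : β) (V : β → M) :
    ∑ g : G, V (g • b) =
      Nat.card (stabilizer G b) • ∑ c ∈ univ.image (fun g : G => g • b), V c := by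
  rw [Finset.sum_comp, Finset.smul_sum]
  refine Finset.sum_congr rfl fun c hc => ?_
  obtain ⟨g₀, -, rfl⟩ := Finset.mem_image.mp hc
  congr 1
  rw [show Nat.card (stabilizer G b) = Nat.card {g : G // g • b = b} from rfl,
    Nat.card_eq_fintype_card, Fintype.card_subtype]
  refine Finset.card_nbij' (g₀⁻¹ * ·) (g₀ * ·) ?_ ?_ ?_ ?_ <;> intro g hg <;>
    simp_all [mul_smul]

theorem card_eq_card_stabilizer_mul_card_orbit (b : β) :
    Fintype.card G = Nat.card (stabilizer G b) * #(univ.image fun g : G => g • b) := by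
  simpa using sum_smul_eq_card_stabilizer_nsmul_sum_orbit (G := G) b fun _ => (1 : ℕ)

theorem inv_card_smul_sum_smul_eq_orbit {𝕜 : Type*} [DivisionRing 𝕜] [CharZero 𝕜]
    [AddCommGroup M] [Module 𝕜 M] (b : β) (V : β → M) :
    (Fintype.card G : 𝕜)⁻¹ • ∑ g : G, V (g • b) =
      (#(univ.image fun g : G => g • b) : 𝕜)⁻¹ • ∑ c ∈ univ.image (fun g : G => g • b), V c := by
  have hstab : (Nat.card (stabilizer G b) : 𝕜) ≠ 0 := Nat.cast_ne_zero.mpr Nat.card_pos.ne'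
  rw [sum_smul_eq_card_stabilizer_nsmul_sum_orbit, card_eq_card_stabilizer_mul_card_orbit b,
    ← Nat.cast_smul_eq_nsmul 𝕜, smul_smul, Nat.cast_mul, mul_inv_rev, mul_assoc,
    inv_mul_cancel₀ hstab, mul_one]

end MulAction

theorem Subgroup.inv_card_smul_sum_smul_eq_of_orbit_eq {G β M 𝕜 : Type*} [Group G]
    [MulAction G β] [DivisionRing 𝕜] [CharZero 𝕜] [AddCommGroup M] [Module 𝕜 M] {H K : Subgroup G}
    [Fintype H] [Fintype K] {b : β} (h : orbit H b = orbit K b) (V : β → M) :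
    (Fintype.card H : 𝕜)⁻¹ • ∑ g : H, V (g • b) = (Fintype.card K : 𝕜)⁻¹ • ∑ g : K, V (g • b) := by
  classical
  have himage : (univ.image fun g : H => g • b) = univ.image fun g : K => g • b := by
    apply Finset.coe_injective
    simp only [coe_image, coe_univ, Set.image_univ]
    exact h
  rw [inv_card_smul_sum_smul_eq_orbit, inv_card_smul_sum_smul_eq_orbit, himage]

namespace MvPolynomial

variable {ι R : Type*} [Field R]

-- `σ • α = α ∘ σ⁻¹`, so that `rename σ` sends the monomial `X ^ α` to `X ^ (σ • α)`.
attribute [local instance] Finsupp.comapMulAction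

noncomputable def reynolds (H : Subgroup (Equiv.Perm ι)) [Fintype H] (f : MvPolynomial ι R) :
    MvPolynomial ι R :=
  (Fintype.card H : R)⁻¹ • ∑ σ : H, rename (σ : Equiv.Perm ι) f

theorem reynolds_eq_sum_monomial (H : Subgroup (Equiv.Perm ι)) [Fintype H]
    (f : MvPolynomial ι R) :
    reynolds H f = ∑ α ∈ f.support,
      (Fintype.card H : R)⁻¹ • ∑ σ : H, monomial ((σ : Equiv.Perm ι) • α) (f.coeff α) := by
  conv_lhs => rw [reynolds, f.as_sum]
  simp only [map_sum, rename_monomial]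
  rw [Finset.sum_comm, Finset.smul_sum]
  rfl

theorem reynolds_eq_of_orbit_eq [CharZero R] {H K : Subgroup (Equiv.Perm ι)} [Fintype H]
    [Fintype K] {f : MvPolynomial ι R} (h : ∀ α ∈ f.support, orbit H α = orbit K α) :
    reynolds H f = reynolds K f := by
  rw [reynolds_eq_sum_monomial, reynolds_eq_sum_monomial]
  exact Finset.sum_congr rfl fun α hα =>
    Subgroup.inv_card_smul_sum_smul_eq_of_orbit_eq (h α hα) fun β => monomial β (f.coeff α)

theorem eval_reynolds (H : Subgroup (Equiv.Perm ι)) [Fintype H] (f : MvPolynomial ι R)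
    (x : ι → R) :
    eval x (reynolds H f) = (Fintype.card H : R)⁻¹ * ∑ σ : H, eval (x ∘ (σ : Equiv.Perm ι)) f := by
  simp [reynolds, smul_eval, eval_rename]

end MvPolynomial

theorem Finsupp.card_support_le_degree {ι : Type*} (α : ι →₀ ℕ) : #α.support ≤ α.degree := by
  simpa [Finsupp.degree_apply] using Finset.card_nsmul_le_sum α.support α 1 fun i hi =>
    Nat.one_le_iff_ne_zero.mpr (Finsupp.mem_support_iff.mp hi)

theorem Finsupp.eq_one_of_degree_le_card_support {ι : Type*} {α : ι →₀ ℕ}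
    (h : α.degree ≤ #α.support) : ∀ i ∈ α.support, α i = 1 := by
  have hle : ∀ i ∈ α.support, 1 ≤ α i := fun i hi =>
    Nat.one_le_iff_ne_zero.mpr (Finsupp.mem_support_iff.mp hi)
  refine fun i hi => ((Finset.sum_eq_sum_iff_of_le hle).mp ?_ i hi).symm
  simpa [Finsupp.degree_apply] using (h.antisymm α.card_support_le_degree).symm

section PermFin

variable {d : ℕ}

theorem one_div_card_permOrbit_mul_sum_eq (H : Subgroup (Equiv.Perm (Fin d))) [Fintype H]
    (x : Fin d → ℝ) (V : (Fin d → ℝ) → ℝ) :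
    1 / (#(permOrbit (H : Set (Equiv.Perm (Fin d))) x) : ℝ) *
        ∑ y ∈ permOrbit (H : Set (Equiv.Perm (Fin d))) x, V y =
      (Fintype.card H : ℝ)⁻¹ * ∑ σ : H, V (x ∘ (σ : Equiv.Perm (Fin d))) := by
  classical
  -- `σ • x = x ∘ σ⁻¹`; as `H` is closed under inverses, `permOrbit H x` is the `H`-orbit of `x`.
  let _ : MulAction H (Fin d → ℝ) := arrowAction
  have horbit : permOrbit (H : Set (Equiv.Perm (Fin d))) x = univ.image fun σ : H => σ • x := by
    ext y
    simp only [permOrbit, Set.Finite.mem_toFinset, Set.mem_image, SetLike.mem_coe, mem_image,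
      mem_univ, true_and, Subtype.exists]
    constructor
    · rintro ⟨σ, hσ, rfl⟩
      refine ⟨σ⁻¹, H.inv_mem hσ, ?_⟩
      funext i
      change x ((⟨σ⁻¹, H.inv_mem hσ⟩ : H)⁻¹ • i) = x (σ i)
      simp [Subgroup.smul_def]
    · rintro ⟨σ, hσ, rfl⟩
      exact ⟨σ⁻¹, H.inv_mem hσ, rfl⟩
  have hsum : ∑ σ : H, V (x ∘ (σ : Equiv.Perm (Fin d))) = ∑ σ : H, V (σ • x) :=
    Fintype.sum_equiv (Equiv.inv H) _ _ fun σ => rfl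
  rw [hsum, horbit, one_div]
  simpa only [smul_eq_mul] using (MulAction.inv_card_smul_sum_smul_eq_orbit (𝕜 := ℝ) x V).symm

theorem isKTransitive_iff_isMultiplyPretransitive (Z : Subgroup (Equiv.Perm (Fin d))) (k : ℕ) :
    IsKTransitive Z k ↔ MulAction.IsMultiplyPretransitive Z (Fin d) k := by
  rw [MulAction.isMultiplyPretransitive_iff]
  refine forall₂_congr fun a b => ⟨fun ⟨σ, hσ, h⟩ => ⟨⟨σ, hσ⟩, ?_⟩, fun ⟨⟨σ, hσ⟩, h⟩ => ?_⟩
  · exact Function.Embedding.ext h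
  · exact ⟨σ, hσ, fun i => DFunLike.congr_fun h i⟩

theorem IsKTransitive.of_le {Z : Subgroup (Equiv.Perm (Fin d))} {k m : ℕ}
    (h : IsKTransitive Z m) (hkm : k ≤ m) (hm : m ≤ d) : IsKTransitive Z k := by
  rw [isKTransitive_iff_isMultiplyPretransitive] at h ⊢
  exact MulAction.isMultiplyPretransitive_of_le hkm (by simpa using hm)

theorem IsKTransitive.exists_eqOn {Z : Subgroup (Equiv.Perm (Fin d))} {A : Finset (Fin d)}
    (h : IsKTransitive Z #A) (σ : Equiv.Perm (Fin d)) : ∃ τ ∈ Z, ∀ i ∈ A, τ i = σ i := by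
  let e : Fin #A ↪ Fin d := A.equivFin.symm.toEmbedding.trans (Function.Embedding.subtype _)
  obtain ⟨τ, hτ, heq⟩ := h e (e.trans σ.toEmbedding)
  refine ⟨τ, hτ, fun i hi => ?_⟩
  simpa [e] using heq (A.equivFin ⟨i, hi⟩)

attribute [local instance] Finsupp.comapMulAction

theorem exists_smul_eq_smul_of_isKTransitive {Z : Subgroup (Equiv.Perm (Fin d))}
    {α : Fin d →₀ ℕ} (hZ : IsKTransitive Z #α.support) (σ : Equiv.Perm (Fin d)) :
    ∃ τ ∈ Z, τ • α = σ • α := by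
  obtain ⟨τ, hτ, heq⟩ := hZ.exists_eqOn σ
  exact ⟨τ, hτ, Finsupp.mapDomain_congr heq⟩

theorem exists_smul_eq_smul_of_isKHomogeneous {Z : Subgroup (Equiv.Perm (Fin d))}
    {α : Fin d →₀ ℕ} (hZ : IsKHomogeneous Z #α.support) (hα : ∀ i ∈ α.support, α i = 1)
    (σ : Equiv.Perm (Fin d)) : ∃ τ ∈ Z, τ • α = σ • α := by
  obtain ⟨τ, hτ, himage⟩ := hZ α.support (α.support.image σ) rfl
    (card_image_of_injective _ σ.injective)
  have hsmul : ∀ (g : Equiv.Perm (Fin d)) (j : Fin d),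
      (g • α) j = if j ∈ α.support.image g then 1 else 0 := by
    intro g j
    have hmem : j ∈ α.support.image g ↔ g⁻¹ • j ∈ α.support := by
      simp [Equiv.Perm.smul_def, ← Equiv.eq_symm_apply]
    rw [Finsupp.comapSMul_apply]
    split_ifs with hj
    · exact hα _ (hmem.mp hj)
    · exact Finsupp.notMem_support_iff.mp (hmem.not.mp hj)
  exact ⟨τ, hτ, Finsupp.ext fun j => by rw [hsmul, hsmul, himage]⟩

theorem orbit_eq_orbit_top_of_degree_le {t : ℕ} {Z : Subgroup (Equiv.Perm (Fin d))}
    (htd : t ≤ d) (hZtrans : IsKTransitive Z (t - 1)) (hZhom : IsKHomogeneous Z t)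
    {α : Fin d →₀ ℕ} (hα : α.degree ≤ t) :
    orbit Z α = orbit (⊤ : Subgroup (Equiv.Perm (Fin d))) α := by
  suffices h : ∀ σ : Equiv.Perm (Fin d), ∃ τ ∈ Z, τ • α = σ • α by
    ext β
    constructor
    · rintro ⟨⟨τ, -⟩, rfl⟩
      exact ⟨⟨τ, Subgroup.mem_top τ⟩, rfl⟩
    · rintro ⟨⟨σ, -⟩, rfl⟩
      obtain ⟨τ, hτ, hτσ⟩ := h σ
      exact ⟨⟨τ, hτ⟩, hτσ⟩
  have hsupp := α.card_support_le_degree.trans hα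
  rcases hsupp.lt_or_eq with hlt | heq
  · exact exists_smul_eq_smul_of_isKTransitive (hZtrans.of_le (by omega) (by omega))
  · exact exists_smul_eq_smul_of_isKHomogeneous (heq ▸ hZhom)
      (Finsupp.eq_one_of_degree_le_card_support (heq ▸ hα))

end PermFin

theorem stmt0_general (d t : ℕ) (htd : t ≤ d)
    (Z : Subgroup (Equiv.Perm (Fin d)))
    (hZtrans : IsKTransitive Z (t - 1)) (hZhom : IsKHomogeneous Z t)
    (x : Fin d → ℝ) (f : MvPolynomial (Fin d) ℝ) (hf : f.totalDegree ≤ t) :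
    (1 / ((permOrbit (Set.univ : Set (Equiv.Perm (Fin d))) x).card : ℝ)) *
        ∑ y ∈ permOrbit (Set.univ : Set (Equiv.Perm (Fin d))) x, MvPolynomial.eval y f
      = (1 / ((permOrbit (Z : Set (Equiv.Perm (Fin d))) x).card : ℝ)) *
          ∑ y ∈ permOrbit (Z : Set (Equiv.Perm (Fin d))) x, MvPolynomial.eval y f := by
  classical
  rw [← Subgroup.coe_top, one_div_card_permOrbit_mul_sum_eq ⊤, one_div_card_permOrbit_mul_sum_eq Z,
    ← MvPolynomial.eval_reynolds ⊤, ← MvPolynomial.eval_reynolds Z,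
    MvPolynomial.reynolds_eq_of_orbit_eq fun α hα => (orbit_eq_orbit_top_of_degree_le htd hZtrans
      hZhom ((MvPolynomial.le_totalDegree hα).trans hf)).symm]

theorem stmt0 (d t : ℕ) (hd : 0 < d) (ht : 0 < t) (htd : t ≤ d)
    (Z : Subgroup (Equiv.Perm (Fin d)))
    (hZtrans : IsKTransitive Z (t - 1)) (hZhom : IsKHomogeneous Z t)
    (x : Fin d → ℝ) (f : MvPolynomial (Fin d) ℝ) (hf : f.totalDegree ≤ t) :
    (1 / ((permOrbit (Set.univ : Set (Equiv.Perm (Fin d))) x).card : ℝ)) *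
        ∑ y ∈ permOrbit (Set.univ : Set (Equiv.Perm (Fin d))) x, MvPolynomial.eval y f
      = (1 / ((permOrbit (Z : Set (Equiv.Perm (Fin d))) x).card : ℝ)) *
          ∑ y ∈ permOrbit (Z : Set (Equiv.Perm (Fin d))) x, MvPolynomial.eval y f :=
  stmt0_general d t htd Z hZtrans hZhom x f hf
end

section
/- Let d and t be positive integers with t ≤ d, and let Z be a t-transitive subgroup of the symmetric group S_d on {1,…,d}. Then for every point x ∈ ℝ^d and every real polynomial f in d variables of total degree at most t, (1/|S_d·x|) ∑_{y ∈ S_d·x} f(y) = (1/|Z·x|) ∑_{y ∈ Z·x} f(y), where Z·x = {(x_{σ(1)},…,x_{σ(d)}) : σ ∈ Z}. -/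
/-
Averaging over the orbit `Z·x` is the same as averaging over the group `Z`: every point of the
orbit is the image of a coset of the stabilizer of `x`. Expanding `f` into monomials, a monomial
`x^m` evaluated at `x ∘ σ` is `∏_{i ∈ S} x_{σ(i)}^{m_i}` with `S` the support of `m`, so it
depends only on the injection `σ|_S : S ↪ {1,…,d}`. Since `|S| ≤ deg f ≤ t ≤ d`, the group `Z`
acts transitively on these injections, so the `Z`-average of the monomial is the uniform average
over all injections `S ↪ {1,…,d}`, which is also the `S_d`-average.
-/
open Finset MulAction MvPolynomial

namespace MulAction

variable {G α : Type*} [Group G] [MulAction G α]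

theorem card_filter_smul_eq_card_stabilizer [Fintype G] [DecidableEq α] (a : α) (h : G) :
    #{g : G | g • a = h • a} = Nat.card (stabilizer G a) := by
  rw [← Fintype.card_subtype, ← Nat.card_eq_fintype_card]
  exact Nat.card_congr ((Equiv.mulLeft h).subtypeEquiv fun g => by simp [mul_smul]).symm

theorem sum_smul_eq_card_stabilizer_smul_sum_image [Fintype G] [DecidableEq α]
    {M : Type*} [AddCommMonoid M] (a : α) (F : α → M) :
    ∑ g : G, F (g • a) =
      Nat.card (stabilizer G a) • ∑ b ∈ univ.image (fun g : G => g • a), F b := by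
  rw [sum_comp, smul_sum]
  refine sum_congr rfl fun b hb => ?_
  obtain ⟨h, -, rfl⟩ := mem_image.1 hb
  rw [card_filter_smul_eq_card_stabilizer]

theorem sum_image_smul_div_card [Fintype G] [DecidableEq α] {K : Type*} [Semifield K]
    [CharZero K] (a : α) (F : α → K) :
    (∑ b ∈ univ.image (fun g : G => g • a), F b) / #(univ.image (fun g : G => g • a)) =
      (∑ g : G, F (g • a)) / Fintype.card G := by
  have hcard :
      Fintype.card G = Nat.card (stabilizer G a) * #(univ.image (fun g : G => g • a)) := by
    simpa using sum_smul_eq_card_stabilizer_smul_sum_image (G := G) a (fun _ => (1 : ℕ))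
  have hstab : (Nat.card (stabilizer G a) : K) ≠ 0 := Nat.cast_ne_zero.2 Nat.card_pos.ne'
  rw [sum_smul_eq_card_stabilizer_smul_sum_image, hcard, nsmul_eq_mul]
  push_cast
  field_simp

theorem sum_smul_div_card_of_isPretransitive [Fintype G] [Fintype α] [IsPretransitive G α]
    {K : Type*} [Semifield K] [CharZero K] (a : α) (F : α → K) :
    (∑ g : G, F (g • a)) / Fintype.card G = (∑ b, F b) / Fintype.card α := by
  classical
  have horbit : univ.image (fun g : G => g • a) = univ :=
    eq_univ_of_forall fun b => by simpa using exists_smul_eq G a b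
  rw [← sum_image_smul_div_card, horbit, card_univ]

theorem isPretransitive_embedding_of_card_le [Finite α] {ι : Type*} [Finite ι] {n : ℕ}
    [IsMultiplyPretransitive G α n] (hι : Nat.card ι ≤ n) (hn : n ≤ Nat.card α) :
    IsPretransitive G (ι ↪ α) := by
  have := isMultiplyPretransitive_of_le (G := G) hι hn
  refine IsPretransitive.of_surjective_map
    (f := MulActionHom.embMap G α (Finite.equivFin ι).toEmbedding) (fun y => ?_) this
  exact ⟨(Finite.equivFin ι).symm.toEmbedding.trans y,
    Function.Embedding.ext fun i => congrArg y ((Finite.equivFin ι).symm_apply_apply i)⟩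

end MulAction

section Polynomial

open Equiv

theorem MvPolynomial.card_support_le_totalDegree {σ R : Type*} [CommSemiring R]
    {f : MvPolynomial σ R} {m : σ →₀ ℕ} (hm : m ∈ f.support) : #m.support ≤ f.totalDegree :=
  calc #m.support ≤ m.sum fun _ e => e := by
        rw [card_eq_sum_ones]
        exact sum_le_sum fun i hi => Nat.one_le_iff_ne_zero.2 (Finsupp.mem_support_iff.1 hi)
    _ ≤ f.totalDegree := le_totalDegree hm

variable {ι K : Type*} [Fintype ι] [Semifield K] [CharZero K]

theorem sum_prod_pow_comp_perm_div_card (H : Subgroup (Perm ι)) [Fintype H] (m : ι →₀ ℕ)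
    [IsPretransitive H (m.support ↪ ι)] (x : ι → K) :
    (∑ σ : H, ∏ i ∈ m.support, (x ∘ σ) i ^ m i) / Fintype.card H =
      (∑ b : m.support ↪ ι, ∏ i, x (b i) ^ m i) / Fintype.card (m.support ↪ ι) := by
  have hprod (σ : H) : ∏ i ∈ m.support, (x ∘ σ) i ^ m i =
      ∏ i : m.support, x ((σ • (Function.Embedding.subtype _ : m.support ↪ ι)) i) ^ m i :=
    (prod_coe_sort m.support _).symm
  simp_rw [hprod]
  -- Instance search would pick the action of `H` on `m.support ↪ ι` induced from `Perm ι`,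
  -- which agrees with the one in the hypothesis only up to non-reducible unfolding.
  exact @sum_smul_div_card_of_isPretransitive H (m.support ↪ ι) _ _ _ _ ‹_› K _ _ _
    fun b => ∏ i, x (b i) ^ m i

theorem sum_eval_comp_perm_div_card (H : Subgroup (Perm ι)) [Fintype H] {t : ℕ}
    [IsMultiplyPretransitive H ι t] (ht : t ≤ Fintype.card ι) (x : ι → K)
    (f : MvPolynomial ι K) (hf : f.totalDegree ≤ t) :
    (∑ σ : H, eval (x ∘ σ) f) / Fintype.card H =
      ∑ m ∈ f.support, coeff m f *
        ((∑ b : m.support ↪ ι, ∏ i, x (b i) ^ m i) / Fintype.card (m.support ↪ ι)) := by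
  simp_rw [eval_eq]
  rw [sum_comm, sum_div]
  refine sum_congr rfl fun m hm => ?_
  have : IsPretransitive H (m.support ↪ ι) := isPretransitive_embedding_of_card_le (n := t)
    (by rw [Nat.card_eq_fintype_card, Fintype.card_coe]
        exact (card_support_le_totalDegree hm).trans hf)
    (by rwa [Nat.card_eq_fintype_card])
  rw [← mul_sum, mul_div_assoc, sum_prod_pow_comp_perm_div_card H m x]

end Polynomial

section PermOrbit

open Equiv

attribute [local instance] arrowAction

theorem permOrbit_eq_image_smul {d : ℕ} (H : Subgroup (Perm (Fin d))) [Fintype H]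
    (x : Fin d → ℝ) : permOrbit (H : Set (Perm (Fin d))) x = univ.image fun σ : H => σ • x := by
  ext y
  simp only [permOrbit, Set.Finite.mem_toFinset, Set.mem_image, SetLike.mem_coe, mem_image,
    mem_univ, true_and]
  constructor
  · rintro ⟨σ, hσ, rfl⟩
    exact ⟨⟨σ, hσ⟩⁻¹, rfl⟩
  · rintro ⟨σ, rfl⟩
    exact ⟨(σ⁻¹ : H), SetLike.coe_mem _, rfl⟩

theorem one_div_card_mul_sum_permOrbit {d : ℕ} (H : Subgroup (Perm (Fin d))) [Fintype H]
    (x : Fin d → ℝ) (F : (Fin d → ℝ) → ℝ) :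
    (1 / (#(permOrbit (H : Set (Perm (Fin d))) x) : ℝ)) *
        ∑ y ∈ permOrbit (H : Set (Perm (Fin d))) x, F y =
      (∑ σ : H, F (x ∘ σ)) / Fintype.card H := by
  rw [permOrbit_eq_image_smul, one_div_mul_eq_div, sum_image_smul_div_card]
  exact congrArg (· / _) (Fintype.sum_equiv (Equiv.inv H) _ _ fun σ => rfl)

end PermOrbit

theorem IsKTransitive.isMultiplyPretransitive {d k : ℕ} {Z : Subgroup (Equiv.Perm (Fin d))}
    (hZ : IsKTransitive Z k) : IsMultiplyPretransitive Z (Fin d) k :=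
  isMultiplyPretransitive_iff.2 fun a b =>
    let ⟨σ, hσ, hab⟩ := hZ a b
    ⟨⟨σ, hσ⟩, Function.Embedding.ext hab⟩

theorem Subgroup.isMultiplyPretransitive_top (α : Type*) (n : ℕ) :
    IsMultiplyPretransitive (⊤ : Subgroup (Equiv.Perm α)) α n :=
  isMultiplyPretransitive_iff.2 fun a b =>
    let ⟨σ, hσ⟩ := Equiv.Perm.exists_smul_eq_embedding a b
    ⟨⟨σ, Subgroup.mem_top σ⟩, hσ⟩

theorem stmt1_general (d t : ℕ) (htd : t ≤ d)
    (Z : Subgroup (Equiv.Perm (Fin d))) (hZtrans : IsKTransitive Z t)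
    (x : Fin d → ℝ) (f : MvPolynomial (Fin d) ℝ) (hf : f.totalDegree ≤ t) :
    (1 / ((permOrbit (Set.univ : Set (Equiv.Perm (Fin d))) x).card : ℝ)) *
        ∑ y ∈ permOrbit (Set.univ : Set (Equiv.Perm (Fin d))) x, MvPolynomial.eval y f
      = (1 / ((permOrbit (Z : Set (Equiv.Perm (Fin d))) x).card : ℝ)) *
          ∑ y ∈ permOrbit (Z : Set (Equiv.Perm (Fin d))) x, MvPolynomial.eval y f := by
  classical
  have := hZtrans.isMultiplyPretransitive
  have := Subgroup.isMultiplyPretransitive_top (Fin d) t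
  have ht : t ≤ Fintype.card (Fin d) := by simpa using htd
  rw [← Subgroup.coe_top, one_div_card_mul_sum_permOrbit, one_div_card_mul_sum_permOrbit,
    sum_eval_comp_perm_div_card ⊤ ht x f hf, sum_eval_comp_perm_div_card Z ht x f hf]

theorem stmt1 (d t : ℕ) (hd : 0 < d) (ht : 0 < t) (htd : t ≤ d)
    (Z : Subgroup (Equiv.Perm (Fin d))) (hZtrans : IsKTransitive Z t)
    (x : Fin d → ℝ) (f : MvPolynomial (Fin d) ℝ) (hf : f.totalDegree ≤ t) :
    (1 / ((permOrbit (Set.univ : Set (Equiv.Perm (Fin d))) x).card : ℝ)) *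
        ∑ y ∈ permOrbit (Set.univ : Set (Equiv.Perm (Fin d))) x, MvPolynomial.eval y f
      = (1 / ((permOrbit (Z : Set (Equiv.Perm (Fin d))) x).card : ℝ)) *
          ∑ y ∈ permOrbit (Z : Set (Equiv.Perm (Fin d))) x, MvPolynomial.eval y f :=
  stmt1_general d t htd Z hZtrans x f hf
end

section
/- Let q, d, t be positive integers with t ≤ d, let z_1,…,z_q be pairwise distinct real numbers, and let X ⊆ {1,…,q}^d be a finite set that is an orthogonal array of strength t. Then for every real polynomial f in d variables of total degree at most t, (1/q^d) ∑_{v ∈ {1,…,q}^d} f(z_{v_1},…,z_{v_d}) = (1/|X|) ∑_{v ∈ X} f(z_{v_1},…,z_{v_d}). -/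
/-- `X ⊆ {1,…,q}^d` (with alphabet `Fin q`) is an orthogonal array of strength `t`:
for any `t` distinct coordinates and any `t`-tuple of values, the number of rows of `X`
taking those values on those coordinates equals `|X|/q^t`. -/
def IsOrthogonalArray {d q : ℕ} (X : Finset (Fin d → Fin q)) (t : ℕ) : Prop :=
  ∀ (i : Fin t ↪ Fin d) (v : Fin t → Fin q),
    (X.filter fun x => ∀ s, x (i s) = v s).card * q ^ t = X.card

open Finset

/-- The full cube is an orthogonal array of any strength `t ≤ d`. -/
lemma univ_isOA {d q t : ℕ} (htd : t ≤ d) :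
    IsOrthogonalArray (Finset.univ : Finset (Fin d → Fin q)) t := by
  classical
  intro i v
  have hr : Fintype.card {j : Fin d // ∃ s, i s = j} = t := by
    have e2 : {j : Fin d // ∃ s, i s = j} ≃ Fin t :=
      (Equiv.subtypeEquivRight fun j => Iff.rfl).trans (Equiv.ofInjective i i.injective).symm
    exact (Fintype.card_congr e2).trans (Fintype.card_fin t)
  have hcard : (Finset.univ.filter fun x : Fin d → Fin q => ∀ s, x (i s) = v s).card
      = q ^ (d - t) := by
    rw [← Fintype.card_subtype]
    have e : {x : Fin d → Fin q // ∀ s, x (i s) = v s}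
        ≃ ({j : Fin d // ¬ ∃ s, i s = j} → Fin q) :=
      { toFun := fun x j => x.1 j.1
        invFun := fun y => ⟨fun j => if h : ∃ s, i s = j then v h.choose else y ⟨j, h⟩, by
          intro s
          have hex : ∃ s', i s' = i s := ⟨s, rfl⟩
          simp only [dif_pos hex]
          exact congrArg v (i.injective hex.choose_spec)⟩
        left_inv := by
          rintro ⟨x, hx⟩
          apply Subtype.ext
          funext j
          dsimp only
          split_ifs with h
          · exact (hx h.choose).symm.trans (congrArg x h.choose_spec)
          · rfl
        right_inv := by
          intro y
          funext j
          dsimp only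
          rw [dif_neg j.2] }
    rw [Fintype.card_congr e, Fintype.card_fun, Fintype.card_fin]
    congr 1
    rw [Fintype.card_subtype_compl, hr, Fintype.card_fin]
  rw [hcard, Finset.card_univ, Fintype.card_fun, Fintype.card_fin, Fintype.card_fin,
    ← pow_add, Nat.sub_add_cancel htd]

/-- Key summation identity for an orthogonal array. -/
lemma OA_sum {d q t : ℕ} (X : Finset (Fin d → Fin q)) (hOA : IsOrthogonalArray X t)
    (i : Fin t ↪ Fin d) (h : (Fin t → Fin q) → ℝ) :
    (q : ℝ) ^ t * ∑ x ∈ X, h (x ∘ i) = (X.card : ℝ) * ∑ w : Fin t → Fin q, h w := by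
  classical
  have hfib : ∑ x ∈ X, h (x ∘ i)
      = ∑ w : Fin t → Fin q,
          ((X.filter fun x => ∀ s, x (i s) = w s).card : ℝ) * h w := by
    rw [← Finset.sum_fiberwise' X (fun x => x ∘ i) h]
    refine Finset.sum_congr rfl fun w _ => ?_
    have hfe : (X.filter fun x => (x ∘ i) = w) = X.filter fun x => ∀ s, x (i s) = w s := by
      apply Finset.filter_congr
      intro x _
      simp [funext_iff]
    rw [Finset.sum_const, nsmul_eq_mul, ← hfe]
  rw [hfib, Finset.mul_sum, Finset.mul_sum]
  refine Finset.sum_congr rfl fun w _ => ?_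
  have h1 := hOA i w
  have h2 : ((X.filter fun x => ∀ s, x (i s) = w s).card : ℝ) * (q : ℝ) ^ t = (X.card : ℝ) := by
    exact_mod_cast congrArg (Nat.cast : ℕ → ℝ) h1
  linear_combination (h w) * h2

theorem stmt3 (q d t : ℕ) (hq : 0 < q) (ht : 0 < t) (htd : t ≤ d)
    (z : Fin q → ℝ) (hz : Function.Injective z)
    (X : Finset (Fin d → Fin q)) (hX : X.Nonempty) (hOA : IsOrthogonalArray X t)
    (f : MvPolynomial (Fin d) ℝ) (hf : f.totalDegree ≤ t) :
    (1 / (q : ℝ) ^ d) * ∑ v : Fin d → Fin q, MvPolynomial.eval (fun i => z (v i)) f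
      = (1 / (X.card : ℝ)) * ∑ v ∈ X, MvPolynomial.eval (fun i => z (v i)) f := by
  classical
  have hq0 : ((q : ℝ)) ≠ 0 := Nat.cast_ne_zero.mpr hq.ne'
  have hX0 : ((X.card : ℝ)) ≠ 0 := Nat.cast_ne_zero.mpr (Finset.card_ne_zero_of_mem hX.choose_spec)
  -- key: sums of functions factoring through t coordinates agree
  have key : ∀ (i : Fin t ↪ Fin d) (h : (Fin t → Fin q) → ℝ),
      (1 / (q : ℝ) ^ d) * ∑ v : Fin d → Fin q, h (v ∘ i)
        = (1 / (X.card : ℝ)) * ∑ x ∈ X, h (x ∘ i) := by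
    intro i h
    have hA := OA_sum X hOA i h
    have hB := OA_sum (Finset.univ : Finset (Fin d → Fin q)) (univ_isOA htd) i h
    have hcardU : ((Finset.univ : Finset (Fin d → Fin q)).card : ℝ) = (q : ℝ) ^ d := by
      rw [Finset.card_univ, Fintype.card_fun, Fintype.card_fin, Fintype.card_fin]
      push_cast
      ring
    rw [hcardU] at hB
    have hqt : ((q : ℝ)) ^ t ≠ 0 := pow_ne_zero _ hq0
    have hqd : ((q : ℝ)) ^ d ≠ 0 := pow_ne_zero _ hq0
    have hv : ∑ v : Fin d → Fin q, h (v ∘ i)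
        = (q : ℝ) ^ d * ((q : ℝ) ^ t)⁻¹ * ∑ w : Fin t → Fin q, h w := by
      field_simp
      linear_combination hB
    have hx2 : ∑ x ∈ X, h (x ∘ i)
        = (X.card : ℝ) * ((q : ℝ) ^ t)⁻¹ * ∑ w : Fin t → Fin q, h w := by
      field_simp
      linear_combination hA
    rw [hv, hx2]
    field_simp
  -- per-monomial statement
  have mono : ∀ s ∈ f.support, ∀ c : ℝ,
      (1 / (q : ℝ) ^ d) * ∑ v : Fin d → Fin q,
          MvPolynomial.eval (fun j => z (v j)) (MvPolynomial.monomial s c)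
        = (1 / (X.card : ℝ)) * ∑ x ∈ X,
          MvPolynomial.eval (fun j => z (x j)) (MvPolynomial.monomial s c) := by
    intro s hs c
    -- the support of s has at most t elements
    have hdeg : s.sum (fun _ e => e) ≤ t := le_trans (MvPolynomial.le_totalDegree hs) hf
    have hsupc : s.support.card ≤ t := by
      calc s.support.card = ∑ j ∈ s.support, 1 := by rw [Finset.card_eq_sum_ones]
        _ ≤ ∑ j ∈ s.support, s j :=
          Finset.sum_le_sum fun j hj =>
            Nat.one_le_iff_ne_zero.mpr (Finsupp.mem_support_iff.mp hj)
        _ = s.sum (fun _ e => e) := rfl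
        _ ≤ t := hdeg
    obtain ⟨T, hsub, hTcard⟩ := Finset.exists_superset_card_eq hsupc
      (by rw [Fintype.card_fin]; exact htd)
    -- embedding of Fin t onto T
    let e : Fin t ≃ ↥T := (Finset.equivFinOfCardEq hTcard).symm
    let i : Fin t ↪ Fin d := e.toEmbedding.trans (Function.Embedding.subtype _)
    have hrange : ∀ j ∈ T, ∃ k, i k = j := by
      intro j hj
      exact ⟨e.symm ⟨j, hj⟩, by simp [i]⟩
    set h : (Fin t → Fin q) → ℝ := fun w => c * ∏ k, z (w k) ^ s (i k) with hh
    have heval : ∀ v : Fin d → Fin q,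
        MvPolynomial.eval (fun j => z (v j)) (MvPolynomial.monomial s c) = h (v ∘ i) := by
      intro v
      rw [MvPolynomial.eval_monomial, hh]
      congr 1
      have h1 : (Finsupp.prod s fun j e => z (v j) ^ e)
          = ∏ j ∈ T, z (v j) ^ s j := by
        rw [Finsupp.prod]
        apply Finset.prod_subset hsub
        intro j _ hj
        rw [Finsupp.notMem_support_iff.mp hj, pow_zero]
      have h2 : ∏ k, z ((v ∘ i) k) ^ s (i k) = ∏ j ∈ T, z (v j) ^ s j := by
        rw [← Finset.prod_coe_sort T (fun j => z (v j) ^ s j)]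
        exact Equiv.prod_comp e (fun a : ↥T => z (v ↑a) ^ s ↑a)
      rw [h1, h2]
    calc (1 / (q : ℝ) ^ d) * ∑ v : Fin d → Fin q,
          MvPolynomial.eval (fun j => z (v j)) (MvPolynomial.monomial s c)
        = (1 / (q : ℝ) ^ d) * ∑ v : Fin d → Fin q, h (v ∘ i) := by
          congr 1; exact Finset.sum_congr rfl fun v _ => heval v
      _ = (1 / (X.card : ℝ)) * ∑ x ∈ X, h (x ∘ i) := key i h
      _ = (1 / (X.card : ℝ)) * ∑ x ∈ X,
            MvPolynomial.eval (fun j => z (x j)) (MvPolynomial.monomial s c) := by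
          congr 1; exact Finset.sum_congr rfl fun x _ => (heval x).symm
  -- decompose f into monomials
  conv_lhs => rw [← MvPolynomial.support_sum_monomial_coeff f]
  conv_rhs => rw [← MvPolynomial.support_sum_monomial_coeff f]
  simp only [map_sum]
  rw [Finset.sum_comm, Finset.mul_sum]
  rw [Finset.sum_comm (s := X), Finset.mul_sum]
  exact Finset.sum_congr rfl fun s hs => mono s hs _
end

section
/- Let V be a finite set with |V| = v, let t be a positive integer, and let 𝓑 be a nonempty finite family of distinct subsets of V (blocks) such that for every integer t' with 0 ≤ t' ≤ t there is a number λ_{t'} so that every t'-element subset of V is contained in exactly λ_{t'} blocks. Let K be the set of block sizes and, for k ∈ K, let 𝓑_k be the set of blocks of size k. Let α ≠ β be real numbers and, for S ⊆ V, let χ_S ∈ ℝ^V be the vector with coordinate α at points of S and β elsewhere. Then for every real polynomial f in v variables of total degree at most t, ∑_{k ∈ K} (|𝓑_k|/(|𝓑|·C(v,k))) ∑_{S ⊆ V, |S| = k} f(χ_S) = (1/|𝓑|) ∑_{b ∈ 𝓑} f(χ_b), where C(v,k) is the binomial coefficient. -/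
/-!
Since `χ_S(p) = β + (α - β) [p ∈ S]` and `[A ⊆ S] [A' ⊆ S] = [A ∪ A' ⊆ S]`, the function
`S ↦ f(χ_S)` is a linear combination of the indicators `S ↦ [A ⊆ S]` with `|A| ≤ deg f ≤ t`.
Grouping blocks by size, the left side is the mean over `b ∈ 𝓑` of the average of the function
over all `|b|`-subsets of `V`, so it suffices to treat one indicator, `|A| = a ≤ t`. Its average
over `k`-subsets is `C(k, a) / C(v, a)`, and double counting pairs `T ⊆ b` with `|T| = a` gives
`∑_{b ∈ 𝓑} C(|b|, a) = C(v, a) λ_a = C(v, a) · #{b ∈ 𝓑 | A ⊆ b}`.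
-/

open Finset

section SubsetIndicator

variable {R V : Type*} [DecidableEq V]

variable (R) in
def subsetIndicator [One R] [Zero R] (A S : Finset V) : R := if A ⊆ S then 1 else 0

variable (R V) in
def subsetIndicatorSpan [CommSemiring R] (d : ℕ) : Submodule R (Finset V → R) :=
  Submodule.span R (subsetIndicator R '' {A | #A ≤ d})

theorem subsetIndicator_mul_subsetIndicator [MulZeroOneClass R] (A A' : Finset V) :
    subsetIndicator R A * subsetIndicator R A' = subsetIndicator R (A ∪ A') := by
  ext S
  by_cases h : A ⊆ S <;> by_cases h' : A' ⊆ S <;> simp [subsetIndicator, union_subset_iff, h, h']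

theorem subsetIndicator_empty [One R] [Zero R] : subsetIndicator R (∅ : Finset V) = 1 := by
  ext S
  simp [subsetIndicator]

theorem subsetIndicator_mem_subsetIndicatorSpan [CommSemiring R] {A : Finset V} {d : ℕ}
    (hA : #A ≤ d) : subsetIndicator R A ∈ subsetIndicatorSpan R V d :=
  Submodule.subset_span ⟨A, hA, rfl⟩

theorem subsetIndicatorSpan_mono [CommSemiring R] {d e : ℕ} (h : d ≤ e) :
    subsetIndicatorSpan R V d ≤ subsetIndicatorSpan R V e :=
  Submodule.span_mono <| Set.image_mono fun _ (hA : _ ≤ d) => hA.trans h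

instance [CommSemiring R] : SetLike.GradedMonoid (subsetIndicatorSpan R V) where
  one_mem :=
    subsetIndicator_empty (R := R) (V := V) ▸ subsetIndicator_mem_subsetIndicatorSpan (by simp)
  mul_mem d e g h hg hh := by
    have := Submodule.mul_mem_mul hg hh
    rw [subsetIndicatorSpan, subsetIndicatorSpan, Submodule.span_mul_span] at this
    refine Submodule.span_le.2 ?_ this
    rintro _ ⟨_, ⟨A, hA, rfl⟩, _, ⟨A', hA', rfl⟩, rfl⟩
    show subsetIndicator R A * subsetIndicator R A' ∈ _
    rw [subsetIndicator_mul_subsetIndicator]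
    exact subsetIndicator_mem_subsetIndicatorSpan ((card_union_le A A').trans (add_le_add hA hA'))

theorem ite_mem_subsetIndicatorSpan_one [CommRing R] (p : V) (α β : R) :
    (fun S : Finset V => if p ∈ S then α else β) ∈ subsetIndicatorSpan R V 1 := by
  have : (fun S : Finset V => if p ∈ S then α else β)
      = (α - β) • subsetIndicator R {p} + β • 1 := by
    ext S
    by_cases h : p ∈ S <;> simp [subsetIndicator, h]
  rw [this]
  exact add_mem (Submodule.smul_mem _ _ (subsetIndicator_mem_subsetIndicatorSpan (by simp)))
    (Submodule.smul_mem _ _ (subsetIndicatorSpan_mono (Nat.zero_le _) SetLike.GradedOne.one_mem))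

theorem eval_ite_mem_subsetIndicatorSpan [CommRing R] (α β : R) {f : MvPolynomial V R} {t : ℕ}
    (hf : f.totalDegree ≤ t) :
    (fun S : Finset V => MvPolynomial.eval (fun p => if p ∈ S then α else β) f)
      ∈ subsetIndicatorSpan R V t := by
  have hsum : (fun S : Finset V => MvPolynomial.eval (fun p => if p ∈ S then α else β) f)
      = ∑ m ∈ f.support, f.coeff m •
          ∏ p ∈ m.support, (fun S : Finset V => if p ∈ S then α else β) ^ m p := by
    ext S
    simp [MvPolynomial.eval_eq, Finset.sum_apply, Finset.prod_apply]
  rw [hsum]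
  refine Submodule.sum_mem _ fun m hm => Submodule.smul_mem _ _ ?_
  refine subsetIndicatorSpan_mono ?_ (SetLike.prod_pow_mem_graded _ (fun _ => 1) _ _
    fun p _ => ite_mem_subsetIndicatorSpan_one p α β)
  simpa [Finsupp.sum] using (MvPolynomial.le_totalDegree hm).trans hf

end SubsetIndicator

section Layers

variable {R V : Type*} [Fintype V]

def layerAverage [DivisionSemiring R] (g : Finset V → R) (k : ℕ) : R :=
  ((Fintype.card V).choose k : R)⁻¹ * ∑ S ∈ powersetCard k univ, g S

theorem layerAverage_add [DivisionSemiring R] (g h : Finset V → R) (k : ℕ) :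
    layerAverage (g + h) k = layerAverage g k + layerAverage h k := by
  simp only [layerAverage, Pi.add_apply, sum_add_distrib, mul_add]

theorem layerAverage_smul [Semifield R] (c : R) (g : Finset V → R) (k : ℕ) :
    layerAverage (c • g) k = c * layerAverage g k := by
  simp only [layerAverage, Pi.smul_apply, smul_eq_mul, ← mul_sum, mul_left_comm]

variable [DecidableEq V]

theorem card_filter_powersetCard_univ_subset_mul_choose (A : Finset V) (k : ℕ) :
    #{S ∈ powersetCard k univ | A ⊆ S} * (Fintype.card V).choose #A
      = (Fintype.card V).choose k * k.choose #A := by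
  rcases lt_or_ge k #A with hk | hAk
  · rw [Nat.choose_eq_zero_of_lt hk, filter_eq_empty_iff.2 fun S hS hAS => ?_]
    · simp
    · exact hk.not_ge ((card_le_card hAS).trans_eq (mem_powersetCard.1 hS).2)
  rw [card_filter_powersetCard_subset A univ k (subset_univ A) hAk, card_univ,
    Nat.choose_mul hAk, mul_comm]

theorem layerAverage_subsetIndicator [Semifield R] [CharZero R] (A : Finset V) {k : ℕ}
    (hk : k ≤ Fintype.card V) :
    layerAverage (subsetIndicator R A) k = (k.choose #A : R) / (Fintype.card V).choose #A := by
  have hcount := card_filter_powersetCard_univ_subset_mul_choose A k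
  have hA : ((Fintype.card V).choose #A : R) ≠ 0 := by
    exact_mod_cast (Nat.choose_pos (card_le_univ A)).ne'
  have hkV : ((Fintype.card V).choose k : R) ≠ 0 := by exact_mod_cast (Nat.choose_pos hk).ne'
  rw [layerAverage]
  simp only [subsetIndicator, sum_boole]
  field_simp
  exact_mod_cast hcount

theorem sum_choose_card_eq_choose_mul (B : Finset (Finset V)) {a lam : ℕ}
    (h : ∀ T : Finset V, #T = a → #{b ∈ B | T ⊆ b} = lam) :
    ∑ b ∈ B, (#b).choose a = (Fintype.card V).choose a * lam := by
  calc ∑ b ∈ B, (#b).choose a = ∑ b ∈ B, #{T ∈ powersetCard a univ | T ⊆ b} := by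
        refine sum_congr rfl fun b _ => ?_
        rw [← card_powersetCard]
        congr 1
        ext T
        simp [and_comm]
    _ = ∑ T ∈ powersetCard a univ, #{b ∈ B | T ⊆ b} :=
        sum_card_bipartiteAbove_eq_sum_card_bipartiteBelow (fun (b T : Finset V) => T ⊆ b)
    _ = (Fintype.card V).choose a * lam := by
        rw [sum_congr rfl fun T hT => h T (mem_powersetCard.1 hT).2]
        simp

theorem sum_layerAverage_card_eq_sum_of_regular [Semifield R] [CharZero R] {B : Finset (Finset V)} {t : ℕ}
    (hreg : ∀ t' ≤ t, ∃ lam : ℕ, ∀ T : Finset V, #T = t' → #{b ∈ B | T ⊆ b} = lam)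
    {g : Finset V → R} (hg : g ∈ subsetIndicatorSpan R V t) :
    ∑ b ∈ B, layerAverage g #b = ∑ b ∈ B, g b := by
  induction hg using Submodule.span_induction with
  | mem g hg =>
    obtain ⟨A, hA, rfl⟩ := hg
    obtain ⟨lam, hlam⟩ := hreg #A hA
    have hA : ((Fintype.card V).choose #A : R) ≠ 0 := by
      exact_mod_cast (Nat.choose_pos (card_le_univ A)).ne'
    rw [sum_congr rfl fun b _ => layerAverage_subsetIndicator A (card_le_univ b), ← sum_div]
    simp only [subsetIndicator, sum_boole]
    rw [hlam A rfl, ← Nat.cast_sum, sum_choose_card_eq_choose_mul B hlam, div_eq_iff hA]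
    push_cast
    ring
  | zero => simp [layerAverage]
  | add g h _ _ hg hh =>
    simp only [layerAverage_add, Pi.add_apply, sum_add_distrib, hg, hh]
  | smul c g _ hg =>
    simp only [layerAverage_smul, Pi.smul_apply, smul_eq_mul, ← mul_sum, hg]

end Layers

theorem stmt4_general {V : Type*} [Fintype V] [DecidableEq V] (v t : ℕ)
    (hv : Fintype.card V = v)
    (B : Finset (Finset V))
    (hreg : ∀ t' ≤ t, ∃ lam : ℕ, ∀ T : Finset V, T.card = t' →
      (B.filter fun b => T ⊆ b).card = lam)
    (α β : ℝ)
    (f : MvPolynomial V ℝ) (hf : f.totalDegree ≤ t) :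
    ∑ k ∈ B.image Finset.card,
      (((B.filter fun b => b.card = k).card : ℝ) / ((B.card : ℝ) * (Nat.choose v k : ℝ))) *
        ∑ S ∈ Finset.powersetCard k (Finset.univ : Finset V),
          MvPolynomial.eval (fun p => if p ∈ S then α else β) f
      = (1 / (B.card : ℝ)) *
          ∑ b ∈ B, MvPolynomial.eval (fun p => if p ∈ b then α else β) f := by
  subst hv
  set g : Finset V → ℝ := fun S => MvPolynomial.eval (fun p => if p ∈ S then α else β) f
  rw [← sum_layerAverage_card_eq_sum_of_regular hreg (eval_ite_mem_subsetIndicatorSpan α β hf),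
    sum_comp (fun k => layerAverage g k) card, mul_sum]
  refine sum_congr rfl fun k _ => ?_
  simp only [layerAverage, nsmul_eq_mul, mul_inv, div_eq_mul_inv]
  ring

theorem stmt4 {V : Type*} [Fintype V] [DecidableEq V] (v t : ℕ)
    (hv : Fintype.card V = v) (ht : 0 < t)
    (B : Finset (Finset V)) (hB : B.Nonempty)
    (hreg : ∀ t' ≤ t, ∃ lam : ℕ, ∀ T : Finset V, T.card = t' →
      (B.filter fun b => T ⊆ b).card = lam)
    (α β : ℝ) (hab : α ≠ β)
    (f : MvPolynomial V ℝ) (hf : f.totalDegree ≤ t) :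
    ∑ k ∈ B.image Finset.card,
      (((B.filter fun b => b.card = k).card : ℝ) / ((B.card : ℝ) * (Nat.choose v k : ℝ))) *
        ∑ S ∈ Finset.powersetCard k (Finset.univ : Finset V),
          MvPolynomial.eval (fun p => if p ∈ S then α else β) f
      = (1 / (B.card : ℝ)) *
          ∑ b ∈ B, MvPolynomial.eval (fun p => if p ∈ b then α else β) f :=
  stmt4_general v t hv B hreg α β f hf
end

section
/- Let F ⊆ E be finite fields with |F| = q and [E : F] = m, and let Tr : E → F denote the field trace. Let t be an integer with 2 ≤ t ≤ q^m − 1. Define C = {(Tr(f(a)))_{a ∈ E} : f ∈ E[x], deg f ≤ t−1} ⊆ F^E, a linear code of length q^m over F. Then |C| ≤ q^{m(t−1)+1}, and C is an orthogonal array of strength t: for every t pairwise distinct elements a_1,…,a_t ∈ E and every (v_1,…,v_t) ∈ F^t, the number of codewords c ∈ C with c_{a_s} = v_s for all s equals |C|/q^t. -/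
/-- The dual of the extended BCH code: the code
`{(Tr(f(a)))_{a ∈ E} : f ∈ E[x], deg f ≤ t−1} ⊆ F^E`, where `Tr : E → F` is the
field trace of the extension `E/F`. -/
def traceCode (F : Type*) {E : Type*} [Field F] [Field E] [Algebra F E] (t : ℕ) :
    Set (E → F) :=
  {c | ∃ f : Polynomial E, f.natDegree ≤ t - 1 ∧ c = fun a => Algebra.trace F E (f.eval a)}

/-! The code is the image of the `F`-linear map `f ↦ (Tr f(a))ₐ` on the polynomials of degree
`≤ t - 1`, a space with `q^{mt}` elements whose kernel contains the `q^{m-1}` constants of trace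
zero; this gives the size bound. For strength `t`, Lagrange interpolation at `t` distinct points
and surjectivity of the trace make evaluation at these points a surjective linear map from the
code onto `F^t`, and every fibre of a surjective linear map has the size of its kernel. -/

open Polynomial Module

theorem LinearMap.card_range_mul_card_ker {R M N : Type*} [Ring R] [AddCommGroup M]
    [AddCommGroup N] [Module R M] [Module R N] (f : M →ₗ[R] N) :
    Nat.card (LinearMap.range f) * Nat.card (LinearMap.ker f) = Nat.card M := by
  rw [← Nat.card_congr f.quotKerEquivRange.toEquiv, mul_comm,
    ← Submodule.card_eq_card_quotient_mul_card]

theorem LinearMap.card_ker_mul_card_of_surjective {R M N : Type*} [Ring R] [AddCommGroup M]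
    [AddCommGroup N] [Module R M] [Module R N] {f : M →ₗ[R] N} (hf : Function.Surjective f) :
    Nat.card (LinearMap.ker f) * Nat.card N = Nat.card M := by
  rw [← f.card_range_mul_card_ker, mul_comm, LinearMap.range_eq_top.mpr hf,
    Nat.card_congr Submodule.topEquiv.toEquiv]

theorem LinearMap.card_fiber_mul_card_of_surjective {R M N : Type*} [Ring R] [AddCommGroup M]
    [AddCommGroup N] [Module R M] [Module R N] {f : M →ₗ[R] N} (hf : Function.Surjective f)
    (y : N) : Nat.card (f ⁻¹' {y}) * Nat.card N = Nat.card M := by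
  change Nat.card (f.toAddMonoidHom ⁻¹' {y}) * _ = _
  rw [Nat.card_congr (f.toAddMonoidHom.fiberEquivKerOfSurjective hf y)]
  exact LinearMap.card_ker_mul_card_of_surjective hf

theorem Polynomial.card_degreeLE (R : Type*) [Semiring R] (n : ℕ) :
    Nat.card (degreeLE R n) = Nat.card R ^ (n + 1) := by
  rw [← degreeLT_succ_eq_degreeLE, Nat.card_congr (degreeLTEquiv R (n + 1)).toEquiv,
    Nat.card_fun, Nat.card_fin]

section TraceCode

variable (F E : Type*)

noncomputable def traceEval [CommRing F] [CommRing E] [Algebra F E] : E[X] →ₗ[F] (E → F) where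
  toFun f a := Algebra.trace F E (f.eval a)
  map_add' f g := by ext a; simp
  map_smul' c f := by ext a; simp [eval_smul]

noncomputable def traceCodeSubmodule [CommRing F] [CommRing E] [Algebra F E] (n : ℕ) :
    Submodule F (E → F) :=
  ((degreeLE E n).restrictScalars F).map (traceEval F E)

variable [Field F] [Field E] [Algebra F E]

theorem traceCode_eq (t : ℕ) :
    traceCode F (E := E) t = traceCodeSubmodule F E (t - 1) := by
  ext c
  simp only [traceCode, traceCodeSubmodule, Set.mem_ofPred_eq, SetLike.mem_coe,
    Submodule.mem_map, Submodule.restrictScalars_mem, mem_degreeLE,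
    ← natDegree_le_iff_degree_le, eq_comm (a := c)]
  rfl

variable {F E} [Finite F] [Finite E]

theorem card_ker_trace_mul_card :
    Nat.card (LinearMap.ker (Algebra.trace F E)) * Nat.card F = Nat.card E :=
  LinearMap.card_ker_mul_card_of_surjective (Algebra.trace_surjective F E)

theorem card_traceCodeSubmodule_le (n : ℕ) :
    Nat.card (traceCodeSubmodule F E n) ≤ Nat.card F ^ (finrank F E * n + 1) := by
  set W := (degreeLE E n).restrictScalars F
  set f := traceEval F E ∘ₗ W.subtype
  have hrange : LinearMap.range f = traceCodeSubmodule F E n := by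
    rw [LinearMap.range_comp, Submodule.range_subtype]
    rfl
  have hC (x : E) : C x ∈ W :=
    mem_degreeLE.mpr (degree_C_le.trans (WithBot.coe_le_coe.mpr n.zero_le))
  have hW : Nat.card W = Nat.card E ^ (n + 1) := card_degreeLE E n
  have : Finite W := Nat.finite_of_card_ne_zero (hW ▸ pow_ne_zero _ Nat.card_pos.ne')
  have hker : Nat.card (LinearMap.ker (Algebra.trace F E)) ≤ Nat.card (LinearMap.ker f) := by
    refine Nat.card_le_card_of_injective (fun x => ⟨⟨C x, hC x⟩, ?_⟩) fun x y hxy => ?_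
    · ext a
      change Algebra.trace F E ((C (x : E)).eval a) = 0
      rw [eval_C]
      exact x.2
    · simpa using congrArg (fun p : LinearMap.ker f => (p : E[X])) hxy
  have hE : Nat.card E = Nat.card F ^ finrank F E := Module.natCard_eq_pow_finrank
  refine Nat.le_of_mul_le_mul_right ?_ (pow_pos (Nat.card_pos (α := F)) (finrank F E))
  calc Nat.card (traceCodeSubmodule F E n) * Nat.card F ^ finrank F E
      = Nat.card (LinearMap.range f) *
          (Nat.card (LinearMap.ker (Algebra.trace F E)) * Nat.card F) := by
        rw [card_ker_trace_mul_card, hE, hrange]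
    _ ≤ Nat.card (LinearMap.range f) * (Nat.card (LinearMap.ker f) * Nat.card F) := by gcongr
    _ = Nat.card W * Nat.card F := by rw [← mul_assoc, f.card_range_mul_card_ker]
    _ = Nat.card F ^ (finrank F E * n + 1) * Nat.card F ^ finrank F E := by
        rw [hW, hE]
        ring

theorem surjective_funLeft_comp_traceCodeSubmodule {k n : ℕ} (hk : k ≤ n + 1) (a : Fin k ↪ E) :
    Function.Surjective ((LinearMap.funLeft F F a).comp (traceCodeSubmodule F E n).subtype) := by
  intro v
  choose w hw using fun s => Algebra.trace_surjective F E (v s)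
  set f := Lagrange.interpolate Finset.univ a w
  have hf : f ∈ degreeLE E n := by
    rw [← degreeLT_succ_eq_degreeLE]
    refine degreeLT_mono hk (mem_degreeLT.mpr ?_)
    have := Lagrange.degree_interpolate_lt (s := Finset.univ) (r := w) a.injective.injOn
    rwa [Finset.card_univ, Fintype.card_fin] at this
  refine ⟨⟨traceEval F E f, Submodule.mem_map_of_mem (p := (degreeLE E n).restrictScalars F) hf⟩,
    ?_⟩
  ext s
  change Algebra.trace F E (f.eval (a s)) = v s
  rw [Lagrange.eval_interpolate_at_node w a.injective.injOn (Finset.mem_univ s), hw]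

theorem card_traceCodeSubmodule_restrict_eq {k n : ℕ} (hk : k ≤ n + 1) (a : Fin k ↪ E)
    (v : Fin k → F) :
    Nat.card {c : traceCodeSubmodule F E n // ∀ s, (c : E → F) (a s) = v s} * Nat.card F ^ k =
      Nat.card (traceCodeSubmodule F E n) := by
  rw [← LinearMap.card_fiber_mul_card_of_surjective
    (surjective_funLeft_comp_traceCodeSubmodule hk a) v, Nat.card_fun, Nat.card_fin]
  congr 1
  exact Nat.card_congr (Equiv.subtypeEquivRight fun c => by simp [funext_iff])

end TraceCode

theorem stmt7_general {F E : Type*} [Field F] [Fintype F] [Field E] [Fintype E] [Algebra F E]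
    (q m t : ℕ) (hq : Fintype.card F = q) (hm : Module.finrank F E = m) :
    Nat.card (traceCode F (E := E) t) ≤ q ^ (m * (t - 1) + 1) ∧
    ∀ (a : Fin t ↪ E) (v : Fin t → F),
      Nat.card {c : traceCode F (E := E) t // ∀ s, (c : E → F) (a s) = v s} * q ^ t
        = Nat.card (traceCode F (E := E) t) := by
  subst hq hm
  rw [traceCode_eq, ← Nat.card_eq_fintype_card]
  exact ⟨card_traceCodeSubmodule_le (t - 1),
    fun a v => card_traceCodeSubmodule_restrict_eq (by omega) a v⟩

theorem stmt7 {F E : Type*} [Field F] [Fintype F] [Field E] [Fintype E] [Algebra F E]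
    (q m t : ℕ) (hq : Fintype.card F = q) (hm : Module.finrank F E = m)
    (ht2 : 2 ≤ t) (ht : t ≤ q ^ m - 1) :
    Nat.card (traceCode F (E := E) t) ≤ q ^ (m * (t - 1) + 1) ∧
    ∀ (a : Fin t ↪ E) (v : Fin t → F),
      Nat.card {c : traceCode F (E := E) t // ∀ s, (c : E → F) (a s) = v s} * q ^ t
        = Nat.card (traceCode F (E := E) t) :=
  stmt7_general q m t hq hm
end

section
/- For every integer M ≥ 3 there exist pairwise distinct positive real numbers z_1,…,z_M such that for every real polynomial f of degree at most 5 in one variable, (1/(2M+1)) · ( f(0) + ∑_{i=1}^M ( f(z_i) + f(−z_i) ) ) = π^{−1/2} ∫_ℝ f(ω) e^{−ω²} dω. In other words, the 2M+1 points {0, ±z_1, …, ±z_M} with equal weights 1/(2M+1) form an equi-weighted one-dimensional Gaussian 5-design. -/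
/-!
The node set is symmetric, so odd moments vanish on both sides, and the even moments
`1, 1/2, 3/4` of the normalized Gaussian are matched exactly when `∑ zᵢ² = N/4` and
`∑ zᵢ⁴ = 3N/8`, where `N = 2M + 1`. With `aᵢ = zᵢ²` this asks for `M` distinct positive numbers
with prescribed sum `S` and sum of squares `Q`; these exist whenever `S²/M < Q < S²`, because the
normalized geometric vectors `aᵢ(t) = S tⁱ / ∑ⱼ tʲ` move continuously from a point mass (`t = 0`,
`∑ aᵢ² = S²`) to the constant vector (`t = 1`, `∑ aᵢ² = S²/M`) and are injective for `0 < t < 1`.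
For `S = N/4`, `Q = 3N/8` the upper bound reads `N > 6`, i.e. `M ≥ 3`.
-/

open Real MeasureTheory Finset

lemma integrable_pow_mul_exp_neg_sq (n : ℕ) :
    Integrable fun x : ℝ => x ^ n * exp (-x ^ 2) := by
  simpa using integrable_rpow_mul_exp_neg_mul_sq one_pos (s := n)
    (neg_one_lt_zero.trans_le n.cast_nonneg)

lemma integral_pow_mul_exp_neg_sq_of_odd {n : ℕ} (hn : Odd n) :
    ∫ x : ℝ, x ^ n * exp (-x ^ 2) = 0 := by
  have h := integral_neg_eq_self (fun x : ℝ => x ^ n * exp (-x ^ 2)) volume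
  simp only [hn.neg_pow, neg_sq, neg_mul, integral_neg] at h
  linarith

lemma hasDerivAt_pow_succ_mul_exp_neg_sq (n : ℕ) (x : ℝ) :
    HasDerivAt (fun x : ℝ => x ^ (n + 1) * exp (-x ^ 2))
      ((n + 1) * (x ^ n * exp (-x ^ 2)) - 2 * (x ^ (n + 2) * exp (-x ^ 2))) x := by
  have h := (hasDerivAt_pow (n + 1) x).fun_mul (hasDerivAt_pow 2 x).fun_neg.exp
  refine h.congr_deriv ?_
  simp only [Nat.add_sub_cancel, Nat.cast_add, Nat.cast_one, Nat.cast_ofNat]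
  ring

lemma integral_pow_add_two_mul_exp_neg_sq (n : ℕ) :
    ∫ x : ℝ, x ^ (n + 2) * exp (-x ^ 2) = (n + 1) / 2 * ∫ x : ℝ, x ^ n * exp (-x ^ 2) := by
  have hn := (integrable_pow_mul_exp_neg_sq n).const_mul ((n : ℝ) + 1)
  have hn2 := (integrable_pow_mul_exp_neg_sq (n + 2)).const_mul 2
  have h := integral_eq_zero_of_hasDerivAt_of_integrable (hasDerivAt_pow_succ_mul_exp_neg_sq n)
    (hn.sub hn2) (integrable_pow_mul_exp_neg_sq (n + 1))
  rw [integral_sub hn hn2, integral_const_mul, integral_const_mul] at h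
  linarith

lemma integral_eval_mul_eq_sum_coeff_mul {g : ℝ → ℝ}
    (hg : ∀ k : ℕ, Integrable fun x => x ^ k * g x) {f : Polynomial ℝ} {n : ℕ}
    (hf : f.natDegree < n) :
    ∫ x, f.eval x * g x = ∑ k ∈ range n, f.coeff k * ∫ x, x ^ k * g x := by
  simp only [f.eval_eq_sum_range' hf, sum_mul, mul_assoc]
  rw [integral_finsetSum _ fun k _ => (hg k).const_mul _]
  simp only [integral_const_mul]

lemma eval_zero_add_sum_eval_add_eval_neg {ι : Type*} [Fintype ι] (z : ι → ℝ)
    {f : Polynomial ℝ} {n : ℕ} (hf : f.natDegree < n) :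
    f.eval 0 + ∑ i, (f.eval (z i) + f.eval (-z i))
      = ∑ k ∈ range n, f.coeff k * (0 ^ k + ∑ i, (z i ^ k + (-z i) ^ k)) := by
  simp only [f.eval_eq_sum_range' hf, ← sum_add_distrib, mul_add, mul_sum]
  rw [sum_comm (s := univ), ← sum_add_distrib]

lemma pi_rpow_neg_half_eq_inv_sqrt : π ^ (-(1 : ℝ) / 2) = (√π)⁻¹ := by
  rw [sqrt_eq_rpow, ← rpow_neg pi_pos.le, neg_div]

lemma symmetric_node_sum_eq_gaussian_moment {ι : Type*} [Fintype ι] (z : ι → ℝ)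
    (h2 : ∑ i, z i ^ 2 = (2 * Fintype.card ι + 1) / 4)
    (h4 : ∑ i, z i ^ 4 = 3 * (2 * Fintype.card ι + 1) / 8) {k : ℕ} (hk : k ≤ 5) :
    1 / (2 * (Fintype.card ι : ℝ) + 1) * (0 ^ k + ∑ i, (z i ^ k + (-z i) ^ k))
      = π ^ (-(1 : ℝ) / 2) * ∫ x : ℝ, x ^ k * exp (-x ^ 2) := by
  rcases Nat.even_or_odd k with hk_even | hk_odd
  · have hsym : ∑ i, (z i ^ k + (-z i) ^ k) = 2 * ∑ i, z i ^ k := by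
      simp only [hk_even.neg_pow, ← two_mul, mul_sum]
    have hI0 : ∫ x : ℝ, x ^ 0 * exp (-x ^ 2) = √π := by simpa using integral_gaussian 1
    have hI2 := integral_pow_add_two_mul_exp_neg_sq 0
    have hI4 := integral_pow_add_two_mul_exp_neg_sq 2
    have hN : (2 * (Fintype.card ι : ℝ) + 1) ≠ 0 := by positivity
    have hπ : √π ≠ 0 := by positivity
    rw [hsym, pi_rpow_neg_half_eq_inv_sqrt]
    obtain ⟨j, rfl⟩ := hk_even
    have hj : j ≤ 2 := by omega
    interval_cases j
    · rw [add_zero, hI0]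
      simp only [pow_zero, sum_const, card_univ, nsmul_eq_mul, mul_one]
      field_simp
      ring
    · rw [hI2, hI0, h2]
      field_simp
      ring
    · rw [hI4, hI2, hI0, h4]
      field_simp
      ring
  · simp [integral_pow_mul_exp_neg_sq_of_odd hk_odd, hk_odd.neg_pow, hk_odd.pos.ne']

lemma exists_injective_pos_sum_eq_sum_sq_eq {M : ℕ} (hM : 0 < M) {S Q : ℝ} (hS : 0 < S)
    (hQ_lower : S ^ 2 / M < Q) (hQ_upper : Q < S ^ 2) :
    ∃ a : Fin M → ℝ, Function.Injective a ∧ (∀ i, 0 < a i) ∧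
      ∑ i, a i = S ∧ ∑ i, a i ^ 2 = Q := by
  obtain ⟨m, rfl⟩ : ∃ m, M = m + 1 := ⟨M - 1, by omega⟩
  set p : ℝ → ℝ := fun t => ∑ j : Fin (m + 1), t ^ (j : ℕ)
  set a : ℝ → Fin (m + 1) → ℝ := fun t i => S * t ^ (i : ℕ) / p t
  have hp : ∀ t : ℝ, 0 ≤ t → 0 < p t := fun t ht => by
    simp only [p, Fin.sum_univ_succ, Fin.val_zero, pow_zero, Fin.val_succ]
    positivity
  have ha_sum : ∀ t, 0 ≤ t → ∑ i, a t i = S := fun t ht => by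
    simp only [a, ← sum_div, ← mul_sum]
    exact mul_div_cancel_right₀ S (hp t ht).ne'
  have ha_zero : ∑ i, a 0 i ^ 2 = S ^ 2 := by
    simp [a, p, Fin.sum_univ_succ]
  have ha_one : ∑ i, a 1 i ^ 2 = S ^ 2 / (m + 1 : ℕ) := by
    simp only [a, p, one_pow, sum_const, card_univ, Fintype.card_fin, nsmul_eq_mul, mul_one]
    field_simp
  have hcont : ContinuousOn (fun t => ∑ i, a t i ^ 2) (Set.Icc 0 1) :=
    continuousOn_finsetSum _ fun i _ =>
      ((continuousOn_const.mul (continuousOn_pow _)).div (by fun_prop)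
        fun t ht => (hp t ht.1).ne').pow 2
  obtain ⟨t, ⟨ht0, ht1⟩, hQ⟩ := intermediate_value_Ioo' zero_le_one hcont
    ⟨ha_one ▸ hQ_lower, ha_zero ▸ hQ_upper⟩
  have hpt := hp t ht0.le
  refine ⟨a t, fun i j hij => Fin.ext ?_, fun i => by positivity, ha_sum t ht0.le, hQ⟩
  have hc : S / p t ≠ 0 := div_ne_zero hS.ne' hpt.ne'
  refine (pow_right_injective₀ ht0 ht1.ne) (mul_left_cancel₀ hc ?_)
  simpa only [a, mul_div_right_comm] using hij

theorem stmt10 (M : ℕ) (hM : 3 ≤ M) :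
    ∃ z : Fin M → ℝ, Function.Injective z ∧ (∀ i, 0 < z i) ∧
      ∀ f : Polynomial ℝ, f.natDegree ≤ 5 →
        (1 / (2 * (M : ℝ) + 1)) *
            (f.eval 0 + ∑ i, (f.eval (z i) + f.eval (-z i)))
          = Real.pi ^ (-(1 : ℝ) / 2) * ∫ ω : ℝ, f.eval ω * Real.exp (-ω ^ 2) := by
  have hM' : (3 : ℝ) ≤ M := by exact_mod_cast hM
  obtain ⟨a, ha_inj, ha_pos, ha_sum, ha_sq⟩ :=
    exists_injective_pos_sum_eq_sum_sq_eq (S := (2 * M + 1) / 4) (Q := 3 * (2 * M + 1) / 8)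
      (by omega : 0 < M) (by positivity) (by rw [div_lt_iff₀ (by positivity)]; nlinarith)
      (by nlinarith)
  refine ⟨fun i => √(a i), fun i j hij => ha_inj ((sqrt_inj (ha_pos i).le (ha_pos j).le).1 hij),
    fun i => sqrt_pos.2 (ha_pos i), fun f hf => ?_⟩
  have h2 : ∑ i, √(a i) ^ 2 = (2 * Fintype.card (Fin M) + 1) / 4 := by
    simpa [sq_sqrt (ha_pos _).le] using ha_sum
  have h4 : ∑ i, √(a i) ^ 4 = 3 * (2 * Fintype.card (Fin M) + 1) / 8 := by
    have hsq : ∀ i, √(a i) ^ 4 = a i ^ 2 := fun i => by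
      rw [show 4 = 2 * 2 from rfl, pow_mul, sq_sqrt (ha_pos i).le]
    simpa [hsq] using ha_sq
  have hf6 : f.natDegree < 6 := by omega
  rw [eval_zero_add_sum_eval_add_eval_neg _ hf6,
    integral_eval_mul_eq_sum_coeff_mul integrable_pow_mul_exp_neg_sq hf6, mul_sum, mul_sum]
  refine sum_congr rfl fun k hk => ?_
  have hk5 : k ≤ 5 := by rw [mem_range] at hk; omega
  have hmoment := symmetric_node_sum_eq_gaussian_moment _ h2 h4 hk5
  rw [Fintype.card_fin] at hmoment
  linear_combination f.coeff k * hmoment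
end

section
/- Fix a positive integer n and let a_k = π^{−1/2} ∫_ℝ ω^k e^{−ω²} dω for k = 0,…,n−1 be the Gaussian moments. For every tuple of pairwise distinct reals z = (z_1,…,z_n) there is a unique vector λ(z) = (λ_1,…,λ_n) ∈ ℝ^n with ∑_{i=1}^n λ_i z_i^k = a_k for all k = 0,…,n−1; call λ(z) admissible if λ_i > 0 for all i. Then the set of admissible weight vectors {λ(z) : z_1,…,z_n pairwise distinct and λ(z)_i > 0 for all i} is an open subset of the hyperplane {λ ∈ ℝ^n : ∑_{i=1}^n λ_i = 1} (with its subspace topology). -/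
/-- The `k`-th moment of the one-dimensional Gaussian measure
`π^{-1/2} e^{-ω²} dω`. -/
noncomputable def gaussMoment (k : ℕ) : ℝ :=
  Real.pi ^ (-(1 : ℝ) / 2) * ∫ ω : ℝ, ω ^ k * Real.exp (-ω ^ 2)

/-!
The weights solve a Vandermonde system, hence exist and are unique. Since `a₀ = 1`, the zeroth
moment equation is the hyperplane itself, and the others are `n - 1` equations in the `n` nodes.
At distinct nodes and nonzero weights their Jacobian in the nodes, `(k λᵢ zᵢ^(k-1))`, is a
Vandermonde matrix times an invertible diagonal one, so it is surjective, and the open mapping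
theorem for `(z, λ) ↦ (moments, λ)` matches every nearby weight vector with nearby distinct nodes.
-/

open Function Filter Topology ContinuousLinearMap

theorem gaussMoment_zero : gaussMoment 0 = 1 := by
  have h := integral_gaussian 1
  simp only [one_mul, div_one, neg_mul] at h
  simp only [gaussMoment, pow_zero, one_mul, h, Real.sqrt_eq_rpow, ← Real.rpow_add Real.pi_pos]
  norm_num

theorem existsUnique_sum_mul_pow_eq {K : Type*} [Field K] {n : ℕ} {z : Fin n → K}
    (hz : Injective z) (a : Fin n → K) :
    ∃! l : Fin n → K, ∀ k : Fin n, ∑ i, l i * z i ^ (k : ℕ) = a k := by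
  have hV : IsUnit (Matrix.vandermonde z) :=
    (Matrix.isUnit_iff_isUnit_det _).2 (Matrix.det_vandermonde_ne_zero_iff.2 hz).isUnit
  have hbij : Bijective (Matrix.vandermonde z).vecMul :=
    ⟨Matrix.vecMul_injective_iff_isUnit.2 hV, Matrix.vecMul_surjective_iff_isUnit.2 hV⟩
  simpa [funext_iff, Matrix.vecMul, dotProduct] using hbij.existsUnique a

theorem exists_sum_mul_pow_eq {K : Type*} [Field K] {m n : ℕ} (hmn : m ≤ n) {z : Fin n → K}
    (hz : Injective z) (a : Fin m → K) :
    ∃ l : Fin n → K, ∀ k : Fin m, ∑ i, l i * z i ^ (k : ℕ) = a k := by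
  obtain ⟨l, hl, -⟩ := existsUnique_sum_mul_pow_eq hz
    fun j => if h : (j : ℕ) < m then a ⟨j, h⟩ else 0
  exact ⟨l, fun k => by simpa using hl (Fin.castLE hmn k)⟩

theorem isOpen_setOf_injective {ι X : Type*} [Finite ι] [TopologicalSpace X] [T2Space X] :
    IsOpen {z : ι → X | Injective z} := by
  have h : {z : ι → X | Injective z} = ⋂ (i) (j) (_ : i ≠ j), {z | z i ≠ z j} := by
    ext z
    simp only [Set.mem_ofPred_eq, Set.mem_iInter, Injective]
    exact forall₂_congr fun i j => not_imp_not.symm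
  rw [h]
  exact isOpen_iInter_of_finite fun i => isOpen_iInter_of_finite fun j =>
    isOpen_iInter_of_finite fun _ => isOpen_ne_fun (continuous_apply i) (continuous_apply j)

/-- An implicit function theorem needing only a surjective partial derivative: it is the open
mapping theorem for `q ↦ (f q, q.2)`. -/
theorem HasStrictFDerivAt.eventually_exists_apply_eq {𝕜 E F G : Type*}
    [NontriviallyNormedField 𝕜] [NormedAddCommGroup E] [NormedSpace 𝕜 E] [CompleteSpace E]
    [NormedAddCommGroup F] [NormedSpace 𝕜 F] [CompleteSpace F]
    [NormedAddCommGroup G] [NormedSpace 𝕜 G] [CompleteSpace G]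
    {f : E × F → G} {f' : E × F →L[𝕜] G} {p : E × F} (hf : HasStrictFDerivAt f f' p)
    (hsurj : Surjective (f' ∘L inl 𝕜 E F)) {U : Set (E × F)} (hU : U ∈ 𝓝 p) :
    ∀ᶠ y in 𝓝 p.2, ∃ x, (x, y) ∈ U ∧ f (x, y) = f p := by
  have hg : HasStrictFDerivAt (fun q => (f q, q.2)) (f'.prod (snd 𝕜 E F)) p :=
    hf.prodMk hasStrictFDerivAt_snd
  have hrange : (f'.prod (snd 𝕜 E F)).range = ⊤ := by
    refine LinearMap.range_eq_top.2 fun ⟨c, v⟩ => ?_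
    obtain ⟨x, hx⟩ := hsurj (c - f' (0, v))
    refine ⟨(x, v), Prod.ext ?_ rfl⟩
    change f' (x, v) = c
    rw [← Prod.fst_add_snd (x, v), map_add]
    simpa [eq_sub_iff_add_eq] using hx
  have himage : (fun q => (f q, q.2)) '' U ∈ 𝓝 (f p, p.2) := by
    rw [← hg.map_nhds_eq_of_surj hrange]
    exact image_mem_map hU
  have hslice : Tendsto (fun y => (f p, y)) (𝓝 p.2) (𝓝 (f p, p.2)) :=
    (continuous_const.prodMk continuous_id).tendsto _
  filter_upwards [hslice himage] with y ⟨q, hqU, hq⟩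
  obtain ⟨hfq, rfl⟩ := Prod.ext_iff.1 hq
  exact ⟨q.1, hqU, hfq⟩

section MomentMap

variable (m : ℕ) {n : ℕ}

/-- Component `k` is the moment of order `k + 1`: the zeroth moment is left out. -/
def momentMap (p : (Fin n → ℝ) × (Fin n → ℝ)) : Fin m → ℝ :=
  fun k => ∑ i, p.2 i * p.1 i ^ ((k : ℕ) + 1)

def momentMapDeriv (p : (Fin n → ℝ) × (Fin n → ℝ)) :
    (Fin n → ℝ) × (Fin n → ℝ) →L[ℝ] Fin m → ℝ :=
  pi fun k => ∑ i, ((((k : ℕ) + 1) * p.2 i * p.1 i ^ (k : ℕ)) • (proj i ∘L fst ℝ _ _) +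
    (p.1 i ^ ((k : ℕ) + 1)) • (proj i ∘L snd ℝ _ _))

theorem hasStrictFDerivAt_momentMap (p : (Fin n → ℝ) × (Fin n → ℝ)) :
    HasStrictFDerivAt (momentMap m) (momentMapDeriv m p) p := by
  refine hasStrictFDerivAt_pi'' fun k => ?_
  have h := HasStrictFDerivAt.fun_sum (u := Finset.univ) fun i _ =>
    ((proj i ∘L snd ℝ (Fin n → ℝ) (Fin n → ℝ)).hasStrictFDerivAt (x := p)).mul
      (((proj i ∘L fst ℝ (Fin n → ℝ) (Fin n → ℝ)).hasStrictFDerivAt (x := p)).pow ((k : ℕ) + 1))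
  refine h.congr_fderiv (ContinuousLinearMap.ext fun q => ?_)
  simp only [momentMapDeriv, ContinuousLinearMap.comp_apply, coe_snd', proj_apply, coe_fst',
    add_tsub_cancel_right, nsmul_eq_mul, Nat.cast_add, Nat.cast_one, smul_smul, sum_apply,
    add_apply, smul_apply, smul_eq_mul, proj_pi]
  exact Finset.sum_congr rfl fun i _ => by ring

theorem surjective_momentMapDeriv_comp_inl {p : (Fin n → ℝ) × (Fin n → ℝ)} (hmn : m ≤ n)
    (hz : Injective p.1) (hl : ∀ i, p.2 i ≠ 0) :
    Surjective (momentMapDeriv m p ∘L inl ℝ _ _) := by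
  intro w
  obtain ⟨y, hy⟩ := exists_sum_mul_pow_eq hmn hz fun k => w k / ((k : ℕ) + 1)
  refine ⟨fun i => y i / p.2 i, funext fun k => ?_⟩
  have hk : ((k : ℕ) + 1 : ℝ) ≠ 0 := by positivity
  simp only [momentMapDeriv, ContinuousLinearMap.comp_apply, inl_apply, coe_pi', sum_apply,
    add_apply, smul_apply, coe_fst', proj_apply, smul_eq_mul, coe_snd', Pi.zero_apply, mul_zero,
    add_zero]
  calc ∑ i, ((k : ℕ) + 1) * p.2 i * p.1 i ^ (k : ℕ) * (y i / p.2 i)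
      = ((k : ℕ) + 1) * ∑ i, y i * p.1 i ^ (k : ℕ) := by
        rw [Finset.mul_sum]
        refine Finset.sum_congr rfl fun i _ => ?_
        field_simp [hl i]
    _ = w k := by rw [hy k, mul_div_cancel₀ _ hk]

theorem isOpen_setOf_exists_momentMap_eq (hmn : m ≤ n) (a : Fin m → ℝ) :
    IsOpen {l : Fin n → ℝ | ∃ z, Injective z ∧ (∀ i, 0 < l i) ∧ momentMap m (z, l) = a} := by
  refine isOpen_iff_mem_nhds.2 fun l ⟨z, hz, hl, hza⟩ => ?_
  have hpos : IsOpen {l : Fin n → ℝ | ∀ i, 0 < l i} := by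
    simp only [Set.ofPred_forall]
    exact isOpen_iInter_of_finite fun i => isOpen_lt continuous_const (continuous_apply i)
  have hU : {q : (Fin n → ℝ) × (Fin n → ℝ) | Injective q.1 ∧ ∀ i, 0 < q.2 i} ∈ 𝓝 (z, l) :=
    ((isOpen_setOf_injective.preimage continuous_fst).inter
      (hpos.preimage continuous_snd)).mem_nhds ⟨hz, hl⟩
  filter_upwards [(hasStrictFDerivAt_momentMap m (z, l)).eventually_exists_apply_eq
    (surjective_momentMapDeriv_comp_inl m hmn hz fun i => (hl i).ne') hU]
    with l' ⟨z', ⟨hz', hl'⟩, hz'a⟩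
  exact ⟨z', hz', hl', hz'a.trans hza⟩

end MomentMap

theorem stmt14 (n : ℕ) (hn : 0 < n) :
    (∀ z : Fin n → ℝ, Function.Injective z →
      ∃! l : Fin n → ℝ, ∀ k : Fin n, ∑ i, l i * z i ^ (k : ℕ) = gaussMoment k) ∧
    IsOpen {l : {l : Fin n → ℝ // ∑ i, l i = 1} |
      ∃ z : Fin n → ℝ, Function.Injective z ∧ (∀ i, 0 < l.1 i) ∧
        ∀ k : Fin n, ∑ i, l.1 i * z i ^ (k : ℕ) = gaussMoment k} := by
  refine ⟨fun z hz => existsUnique_sum_mul_pow_eq hz _, ?_⟩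
  obtain ⟨m, rfl⟩ : ∃ m, n = m + 1 := ⟨n - 1, by omega⟩
  convert (isOpen_setOf_exists_momentMap_eq m m.le_succ fun k => gaussMoment ((k : ℕ) + 1)).preimage
    continuous_subtype_val using 1
  ext ⟨l, hl⟩
  simp [Fin.forall_fin_succ, hl, gaussMoment_zero, momentMap, funext_iff]
end

section
/- Let d, r, N be positive integers, let y_1,…,y_N be points of the unit sphere S^{d−1} ⊂ ℝ^d, let w_1,…,w_N > 0, and let c_{d,r} = ∫_{S^{d−1}} ω_1^{2r} dσ(ω), where σ is the uniform (rotation-invariant) probability measure on S^{d−1}. Then the following are equivalent: (i) ∫_{S^{d−1}} f dσ = ∑_{i=1}^N w_i f(y_i) for every homogeneous real polynomial f of degree 2r in d variables; (ii) c_{d,r} (X_1² + ⋯ + X_d²)^r = ∑_{i=1}^N w_i (y_{i1} X_1 + ⋯ + y_{id} X_d)^{2r} for all (X_1,…,X_d) ∈ ℝ^d; (iii) the map ι : ℝ^d → ℝ^N given by ι(ω)_i = (w_i/c_{d,r})^{1/(2r)} ⟨ω, y_i⟩ satisfies (∑_{i=1}^N |ι(ω)_i|^{2r})^{1/(2r)}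 = (∑_{j=1}^d ω_j²)^{1/2} for all ω ∈ ℝ^d, i.e., ι is an isometric embedding of ℓ_2^d into ℓ_{2r}^N. -/
/-!
Rotation invariance of `σ` (through the reflection exchanging two vectors of equal norm) gives
`∫ ⟪x, u⟫ ^ (2r) dσ = c ‖u‖ ^ (2r)`, and `c > 0` because `∑ⱼ xⱼ ^ (2r)` is positive on the sphere.
Hence (ii) says exactly that the integral and the cubature rule agree on the powers
`⟪X, ·⟫ ^ (2r)` of linear forms. These span the homogeneous polynomials of degree `2r`: for a
functional `φ` killing them, the polynomial `∑ₛ multinomial(s) φ(xˢ) Xˢ` evaluates to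
`φ(⟪X, ·⟫ ^ (2r))`, so it is zero and `φ` kills every monomial of degree `2r`. Finally (ii) ⇔ (iii)
is the identity `|(wᵢ / c) ^ (1 / 2r) t| ^ (2r) = (wᵢ / c) t ^ (2r)`.
-/

open MeasureTheory MvPolynomial Finset
open scoped RealInnerProductSpace

namespace MvPolynomial

variable {σ K : Type*} [Fintype σ] [Field K]

theorem isHomogeneous_sum_smul_X (a : σ → K) :
    (∑ i, a i • X i : MvPolynomial σ K).IsHomogeneous 1 :=
  IsHomogeneous.sum _ _ _ fun i _ => by
    simpa only [smul_eq_C_mul] using (isHomogeneous_X K i).C_mul (a i)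

theorem eval_sum_smul_X (a v : σ → K) : eval v (∑ i, a i • X i) = ∑ i, v i * a i := by
  simp [mul_comm]

section

variable [DecidableEq σ]

theorem IsHomogeneous.mem_finsuppAntidiag_of_coeff_ne_zero {f : MvPolynomial σ K} {n : ℕ}
    (hf : f.IsHomogeneous n) {s : σ →₀ ℕ} (hs : coeff s f ≠ 0) : s ∈ univ.finsuppAntidiag n := by
  simpa [mem_finsuppAntidiag, Finsupp.degree_eq_sum] using
    (Finsupp.degree_eq_weight_one (R := ℕ) ▸ hf hs : Finsupp.degree s = n)

theorem apply_eq_sum_coeff_mul_apply_monomial (φ : MvPolynomial σ K →ₗ[K] K) {n : ℕ}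
    {f : MvPolynomial σ K} (hf : f.IsHomogeneous n) :
    φ f = ∑ s ∈ univ.finsuppAntidiag n, coeff s f * φ (monomial s 1) := by
  conv_lhs => rw [f.as_sum]
  rw [map_sum, Finset.sum_subset (fun s hs =>
    hf.mem_finsuppAntidiag_of_coeff_ne_zero (mem_support_iff.mp hs))
    fun s _ hs => by simp [notMem_support_iff.mp hs]]
  refine Finset.sum_congr rfl fun s _ => ?_
  rw [← smul_eq_mul, ← map_smul, smul_monomial, smul_eq_mul, mul_one]

end

theorem apply_eq_zero_of_apply_sum_smul_X_pow_eq_zero [CharZero K]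
    (φ : MvPolynomial σ K →ₗ[K] K) {n : ℕ} (h : ∀ a : σ → K, φ ((∑ i, a i • X i) ^ n) = 0)
    {f : MvPolynomial σ K} (hf : f.IsHomogeneous n) : φ f = 0 := by
  classical
  set P : MvPolynomial σ K := ∑ s ∈ univ.finsuppAntidiag n,
    monomial s (s.multinomial * φ (monomial s 1))
  have heval (a : σ → K) : eval a P = φ ((∑ i, a i • X i) ^ n) := by
    have hpow := (isHomogeneous_sum_smul_X a).pow n
    rw [one_mul] at hpow
    rw [apply_eq_sum_coeff_mul_apply_monomial φ hpow, map_sum]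
    refine Finset.sum_congr rfl fun s hs => ?_
    have hdeg : s.sum (fun _ m => m) = n := by
      simpa [mem_finsuppAntidiag, Finsupp.sum_fintype] using hs
    rw [eval_monomial, coeff_linearCombination_X_pow_of_fintype, if_pos hdeg]
    ring
  have hP : P = 0 := MvPolynomial.funext fun a => by simp [heval, h]
  rw [apply_eq_sum_coeff_mul_apply_monomial φ hf]
  refine Finset.sum_eq_zero fun s hs => ?_
  have hcoeff : coeff s P = s.multinomial * φ (monomial s 1) := by
    simp [P, coeff_sum, coeff_monomial, hs]
  have hmult : (s.multinomial : K) ≠ 0 := by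
    rw [← Finsupp.multinomial_of_support_subset (subset_univ _)]
    exact_mod_cast (Nat.multinomial_pos _ _).ne'
  rw [hP, coeff_zero, eq_comm, mul_eq_zero] at hcoeff
  simp [hcoeff.resolve_left hmult]

theorem forall_isHomogeneous_apply_eq_iff [CharZero K] (L M : MvPolynomial σ K →ₗ[K] K)
    (n : ℕ) :
    (∀ f : MvPolynomial σ K, f.IsHomogeneous n → L f = M f)
      ↔ ∀ a : σ → K, L ((∑ i, a i • X i) ^ n) = M ((∑ i, a i • X i) ^ n) := by
  refine ⟨fun h a => h _ (by simpa using (isHomogeneous_sum_smul_X a).pow n), fun h f hf => ?_⟩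
  rw [← sub_eq_zero, ← LinearMap.sub_apply]
  exact apply_eq_zero_of_apply_sum_smul_X_pow_eq_zero (L - M)
    (fun a => by rw [LinearMap.sub_apply, h a, sub_self]) hf

end MvPolynomial

theorem Continuous.integrable_of_ae_mem_isCompact {X F : Type*} [TopologicalSpace X] [T2Space X]
    [MeasurableSpace X] [OpensMeasurableSpace X] [NormedAddCommGroup F] {μ : Measure X}
    [IsFiniteMeasure μ] {K : Set X} (hK : IsCompact K) (hμK : ∀ᵐ x ∂μ, x ∈ K) {f : X → F}
    (hf : Continuous f) : Integrable f μ := by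
  rw [← Measure.restrict_eq_self_of_ae_mem hμK]
  exact hf.continuousOn.integrableOn_compact hK

section InvariantMeasure

variable {E : Type*} [NormedAddCommGroup E] [InnerProductSpace ℝ E] [MeasurableSpace E]
  [BorelSpace E] {μ : Measure E}

theorem integral_comp_inner_eq_of_norm_eq (hμ : ∀ g : E ≃ₗᵢ[ℝ] E, μ.map g = μ) (f : ℝ → ℝ)
    {u v : E} (huv : ‖u‖ = ‖v‖) : ∫ x, f ⟪x, u⟫ ∂μ = ∫ x, f ⟪x, v⟫ ∂μ := by
  set g : E ≃ₗᵢ[ℝ] E := Submodule.reflection (ℝ ∙ (u - v))ᗮ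
  have hgu : g u = v := Submodule.reflection_sub huv
  calc ∫ x, f ⟪x, u⟫ ∂μ = ∫ x, f ⟪g x, v⟫ ∂μ := by
        simp only [← hgu, LinearIsometryEquiv.inner_map_map]
    _ = ∫ x, f ⟪x, v⟫ ∂μ.map g :=
        (integral_map_equiv g.toHomeomorph.toMeasurableEquiv (fun x => f ⟪x, v⟫)).symm
    _ = ∫ x, f ⟪x, v⟫ ∂μ := by rw [hμ g]

theorem integral_inner_pow_eq_norm_pow_mul (hμ : ∀ g : E ≃ₗᵢ[ℝ] E, μ.map g = μ) {e : E}
    (he : ‖e‖ = 1) (u : E) (n : ℕ) : ∫ x, ⟪x, u⟫ ^ n ∂μ = ‖u‖ ^ n * ∫ x, ⟪x, e⟫ ^ n ∂μ := by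
  rcases eq_or_ne u 0 with rfl | hu
  · rcases n.eq_zero_or_pos with rfl | hn
    · simp
    · simp [zero_pow hn.ne']
  have hu₀ : ‖u‖ ≠ 0 := norm_ne_zero_iff.mpr hu
  have hu' : ‖‖u‖⁻¹ • u‖ = ‖e‖ := by
    rw [norm_smul, norm_inv, norm_norm, inv_mul_cancel₀ hu₀, he]
  calc ∫ x, ⟪x, u⟫ ^ n ∂μ = ∫ x, ‖u‖ ^ n * ⟪x, ‖u‖⁻¹ • u⟫ ^ n ∂μ := by
        congr 1 with x
        rw [real_inner_smul_right, ← mul_pow, ← mul_assoc, mul_inv_cancel₀ hu₀, one_mul]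
    _ = ‖u‖ ^ n * ∫ x, ⟪x, e⟫ ^ n ∂μ := by
        rw [integral_const_mul, integral_comp_inner_eq_of_norm_eq hμ (· ^ n) hu']

theorem integral_inner_pow_pos [FiniteDimensional ℝ E] [IsProbabilityMeasure μ]
    (hμ : ∀ g : E ≃ₗᵢ[ℝ] E, μ.map g = μ) (hμs : ∀ᵐ x ∂μ, x ∈ Metric.sphere (0 : E) 1) {e : E}
    (he : ‖e‖ = 1) (n : ℕ) : 0 < ∫ x, ⟪x, e⟫ ^ (2 * n) ∂μ := by
  set b := stdOrthonormalBasis ℝ E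
  have hint (v : E) : Integrable (fun x => ⟪x, v⟫ ^ (2 * n)) μ :=
    (by fun_prop : Continuous fun x : E => ⟪x, v⟫ ^ (2 * n)).integrable_of_ae_mem_isCompact
      (isCompact_sphere 0 1) hμs
  have hsum : ∫ x, ∑ i, ⟪x, b i⟫ ^ (2 * n) ∂μ
      = Module.finrank ℝ E * ∫ x, ⟪x, e⟫ ^ (2 * n) ∂μ := by
    rw [integral_finsetSum _ fun i _ => hint (b i)]
    simp [integral_comp_inner_eq_of_norm_eq hμ (· ^ (2 * n)) ((b.orthonormal.1 _).trans he.symm)]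
  have hpos : 0 < ∫ x, ∑ i, ⟪x, b i⟫ ^ (2 * n) ∂μ := by
    rw [integral_pos_iff_support_of_nonneg
      (fun x => sum_nonneg fun i _ => (even_two_mul n).pow_nonneg _)
      (integrable_finsetSum _ fun i _ => hint (b i))]
    have hsphere : μ (Metric.sphere 0 1) ≠ 0 := by
      rw [(ae_mem_iff_measure_eq Metric.isClosed_sphere.measurableSet.nullMeasurableSet).1 hμs]
      simp
    refine measure_pos_of_superset (fun x hx => ?_) hsphere
    obtain ⟨i, hi⟩ : ∃ i, ⟪x, b i⟫ ≠ 0 := by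
      by_contra! h
      have hx0 : x = 0 := by simpa [real_inner_comm, h] using (b.sum_repr' x).symm
      simp [hx0] at hx
    exact (sum_pos' (fun j _ => (even_two_mul n).pow_nonneg ⟪x, b j⟫)
      ⟨i, mem_univ i, (even_two_mul n).pow_pos hi⟩).ne'
  have hd : (0 : ℝ) < Module.finrank ℝ E := by
    have : Nontrivial E := ⟨e, 0, by rintro rfl; simp at he⟩
    exact_mod_cast Module.finrank_pos
  rw [hsum] at hpos
  exact pos_of_mul_pos_right hpos hd.le

end InvariantMeasure

theorem rpow_sum_abs_mul_pow_eq_sqrt_iff {ι : Type*} [Fintype ι] {r : ℕ} (hr : r ≠ 0) {c S : ℝ}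
    (hc : 0 < c) (hS : 0 ≤ S) {w : ι → ℝ} (hw : ∀ i, 0 ≤ w i) (a : ι → ℝ) :
    (∑ i, |(w i / c) ^ ((1 : ℝ) / (2 * r)) * a i| ^ (2 * r)) ^ ((1 : ℝ) / (2 * r))
        = S ^ ((1 : ℝ) / 2)
      ↔ c * S ^ r = ∑ i, w i * a i ^ (2 * r) := by
  have h2r : (2 * r : ℝ) ≠ 0 := by positivity
  have hterm (i : ι) :
      |(w i / c) ^ ((1 : ℝ) / (2 * r)) * a i| ^ (2 * r) = c⁻¹ * (w i * a i ^ (2 * r)) := by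
    have hwc : 0 ≤ w i / c := div_nonneg (hw i) hc.le
    rw [abs_mul, mul_pow, (even_two_mul r).pow_abs, (even_two_mul r).pow_abs,
      ← Real.rpow_natCast, ← Real.rpow_mul hwc]
    push_cast
    rw [one_div_mul_cancel h2r, Real.rpow_one, div_eq_inv_mul, mul_assoc]
  have hsqrt : (S ^ ((1 : ℝ) / 2)) ^ (2 * r : ℝ) = S ^ r := by
    rw [← Real.rpow_mul hS, ← Real.rpow_natCast]
    congr 1
    field_simp
  have hsum : 0 ≤ c⁻¹ * ∑ i, w i * a i ^ (2 * r) :=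
    mul_nonneg (inv_nonneg.2 hc.le)
      (sum_nonneg fun i _ => mul_nonneg (hw i) ((even_two_mul r).pow_nonneg _))
  rw [sum_congr rfl fun i _ => hterm i, ← mul_sum, one_div,
    Real.rpow_inv_eq hsum (Real.rpow_nonneg hS _) h2r, hsqrt,
    inv_mul_eq_iff_eq_mul₀ hc.ne', eq_comm]

noncomputable def integralEvalₗ {Ω σ : Type*} [MeasurableSpace Ω] (μ : Measure Ω) (p : Ω → σ → ℝ)
    (hp : ∀ f : MvPolynomial σ ℝ, Integrable (fun x => eval (p x) f) μ) :
    MvPolynomial σ ℝ →ₗ[ℝ] ℝ where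
  toFun f := ∫ x, eval (p x) f ∂μ
  map_add' f g := by simp only [map_add, integral_add (hp f) (hp g)]
  map_smul' a f := by simp [smul_eq_C_mul, integral_const_mul]

theorem forall_isHomogeneous_integral_eval_eq_iff {Ω ι ι' : Type*} [Fintype ι] [Fintype ι']
    [MeasurableSpace Ω] {μ : Measure Ω} {p : Ω → ι → ℝ}
    (hp : ∀ f : MvPolynomial ι ℝ, Integrable (fun x => eval (p x) f) μ)
    (y : ι' → ι → ℝ) (w : ι' → ℝ) (n : ℕ) :
    (∀ f : MvPolynomial ι ℝ, f.IsHomogeneous n →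
        ∫ x, eval (p x) f ∂μ = ∑ i, w i * eval (y i) f)
      ↔ ∀ X : ι → ℝ,
        ∫ x, (∑ j, p x j * X j) ^ n ∂μ = ∑ i, w i * (∑ j, y i j * X j) ^ n := by
  set M : MvPolynomial ι ℝ →ₗ[ℝ] ℝ := ∑ i, w i • (aeval (y i)).toLinearMap
  have hM (f : MvPolynomial ι ℝ) : M f = ∑ i, w i * eval (y i) f := by simp [M]
  simpa only [integralEvalₗ, LinearMap.coe_mk, AddHom.coe_mk, hM, map_pow, eval_sum_smul_X]
    using forall_isHomogeneous_apply_eq_iff (integralEvalₗ μ p hp) M n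

namespace EuclideanSpace

variable {ι : Type*} [Fintype ι] {μ : Measure (EuclideanSpace ℝ ι)}

theorem integral_sum_mul_pow
    (hμ : ∀ g : EuclideanSpace ℝ ι ≃ₗᵢ[ℝ] EuclideanSpace ℝ ι, μ.map g = μ)
    (i : ι) (X : ι → ℝ) (n : ℕ) :
    ∫ x, (∑ j, x j * X j) ^ (2 * n) ∂μ = (∫ x, x i ^ (2 * n) ∂μ) * (∑ j, X j ^ 2) ^ n := by
  classical
  have hinner (x : EuclideanSpace ℝ ι) : ⟪x, WithLp.toLp 2 X⟫ = ∑ j, x j * X j := by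
    simp [PiLp.inner_apply, mul_comm]
  simp_rw [← hinner]
  rw [integral_inner_pow_eq_norm_pow_mul hμ (e := single i 1) (by simp), pow_mul,
    real_norm_sq_eq, mul_comm]
  simp [inner_single_right]

theorem integral_apply_pow_pos [IsProbabilityMeasure μ]
    (hμ : ∀ g : EuclideanSpace ℝ ι ≃ₗᵢ[ℝ] EuclideanSpace ℝ ι, μ.map g = μ)
    (hμs : ∀ᵐ x ∂μ, x ∈ Metric.sphere (0 : EuclideanSpace ℝ ι) 1) (i : ι) (n : ℕ) :
    0 < ∫ x, x i ^ (2 * n) ∂μ := by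
  classical
  simpa [inner_single_right] using integral_inner_pow_pos hμ hμs (e := single i 1) (by simp) n

end EuclideanSpace

theorem stmt17_general (d r N : ℕ) (hd : 0 < d) (hr : 0 < r)
    (σ : Measure (EuclideanSpace ℝ (Fin d))) [IsProbabilityMeasure σ]
    (hσsphere : σ (Metric.sphere (0 : EuclideanSpace ℝ (Fin d)) 1) = 1)
    (hσinv : ∀ g : EuclideanSpace ℝ (Fin d) ≃ₗᵢ[ℝ] EuclideanSpace ℝ (Fin d),
      σ.map g = σ)
    (y : Fin N → EuclideanSpace ℝ (Fin d))
    (w : Fin N → ℝ) (hw : ∀ i, 0 < w i)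
    (c : ℝ) (hc : c = ∫ x, x ⟨0, hd⟩ ^ (2 * r) ∂σ) :
    ((∀ f : MvPolynomial (Fin d) ℝ, f.IsHomogeneous (2 * r) →
        ∫ x, MvPolynomial.eval (fun i => x i) f ∂σ
          = ∑ i, w i * MvPolynomial.eval (fun j => y i j) f)
      ↔ (∀ X : Fin d → ℝ,
          c * (∑ j, X j ^ 2) ^ r = ∑ i, w i * (∑ j, y i j * X j) ^ (2 * r)))
    ∧ ((∀ X : Fin d → ℝ,
          c * (∑ j, X j ^ 2) ^ r = ∑ i, w i * (∑ j, y i j * X j) ^ (2 * r))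
      ↔ (∀ ω : EuclideanSpace ℝ (Fin d),
          (∑ i, |(w i / c) ^ ((1 : ℝ) / (2 * r)) * ∑ j, ω j * y i j| ^ (2 * r))
              ^ ((1 : ℝ) / (2 * r))
            = (∑ j, ω j ^ 2) ^ ((1 : ℝ) / 2))) := by
  have hae : ∀ᵐ x ∂σ, x ∈ Metric.sphere (0 : EuclideanSpace ℝ (Fin d)) 1 := by
    rwa [ae_mem_iff_measure_eq Metric.isClosed_sphere.measurableSet.nullMeasurableSet,
      measure_univ]
  have hcpos : 0 < c := hc ▸ EuclideanSpace.integral_apply_pow_pos hσinv hae _ r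
  have hint (f : MvPolynomial (Fin d) ℝ) : Integrable (fun x => eval (fun i => x i) f) σ :=
    (continuous_eval f |>.comp (PiLp.continuous_ofLp 2 _)).integrable_of_ae_mem_isCompact
      (isCompact_sphere 0 1) hae
  have hiso (X : Fin d → ℝ) :
      (∑ i, |(w i / c) ^ ((1 : ℝ) / (2 * r)) * ∑ j, X j * y i j| ^ (2 * r)) ^ ((1 : ℝ) / (2 * r))
          = (∑ j, X j ^ 2) ^ ((1 : ℝ) / 2)
        ↔ c * (∑ j, X j ^ 2) ^ r = ∑ i, w i * (∑ j, y i j * X j) ^ (2 * r) := by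
    simp_rw [mul_comm (X _)]
    exact rpow_sum_abs_mul_pow_eq_sqrt_iff hr.ne' hcpos (sum_nonneg fun j _ => sq_nonneg (X j))
      (fun i => (hw i).le) _
  refine ⟨(forall_isHomogeneous_integral_eval_eq_iff hint _ w _).trans
    (forall_congr' fun X => ?_), fun h ω => (hiso ω.ofLp).2 (h _),
    fun h X => (hiso X).1 (h (WithLp.toLp 2 X))⟩
  rw [EuclideanSpace.integral_sum_mul_pow hσinv ⟨0, hd⟩, ← hc]

theorem stmt17 (d r N : ℕ) (hd : 0 < d) (hr : 0 < r) (hN : 0 < N)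
    (σ : Measure (EuclideanSpace ℝ (Fin d))) [IsProbabilityMeasure σ]
    (hσsphere : σ (Metric.sphere (0 : EuclideanSpace ℝ (Fin d)) 1) = 1)
    (hσinv : ∀ g : EuclideanSpace ℝ (Fin d) ≃ₗᵢ[ℝ] EuclideanSpace ℝ (Fin d),
      σ.map g = σ)
    (y : Fin N → EuclideanSpace ℝ (Fin d)) (hy : ∀ i, ‖y i‖ = 1)
    (w : Fin N → ℝ) (hw : ∀ i, 0 < w i)
    (c : ℝ) (hc : c = ∫ x, x ⟨0, hd⟩ ^ (2 * r) ∂σ) :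
    ((∀ f : MvPolynomial (Fin d) ℝ, f.IsHomogeneous (2 * r) →
        ∫ x, MvPolynomial.eval (fun i => x i) f ∂σ
          = ∑ i, w i * MvPolynomial.eval (fun j => y i j) f)
      ↔ (∀ X : Fin d → ℝ,
          c * (∑ j, X j ^ 2) ^ r = ∑ i, w i * (∑ j, y i j * X j) ^ (2 * r)))
    ∧ ((∀ X : Fin d → ℝ,
          c * (∑ j, X j ^ 2) ^ r = ∑ i, w i * (∑ j, y i j * X j) ^ (2 * r))
      ↔ (∀ ω : EuclideanSpace ℝ (Fin d),
          (∑ i, |(w i / c) ^ ((1 : ℝ) / (2 * r)) * ∑ j, ω j * y i j| ^ (2 * r))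
              ^ ((1 : ℝ) / (2 * r))
            = (∑ j, ω j ^ 2) ^ ((1 : ℝ) / 2))) :=
  stmt17_general d r N hd hr σ hσsphere hσinv y w hw c hc
end

section
/- Let Ω be a set, m a positive integer, and τ : Ω → ℝ^m an arbitrary map. Then for every vector v ∈ ℝ^m, the real-valued function on Ω given by ξ ↦ ⟨v, τ(ξ)⟩ belongs to the linear span, inside the vector space of all functions Ω → ℝ, of the family of functions {ξ ↦ ⟨τ(a), τ(ξ)⟩ : a ∈ Ω}. -/
/-! Let P be the orthogonal projection onto the span K of the τ a. Since v - P v ⟂ K, the functions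
ξ ↦ ⟪τ ξ, v⟫ and ξ ↦ ⟪τ ξ, P v⟫ coincide, and the latter is the image of P v ∈ K under the linear
map u ↦ (ξ ↦ ⟪τ ξ, u⟫), which sends K onto the span of the functions ξ ↦ ⟪τ ξ, τ a⟫. -/

open Submodule
open scoped RealInnerProductSpace

theorem inner_mem_span_range_inner {Ω E : Type*} [NormedAddCommGroup E] [InnerProductSpace ℝ E]
    (τ : Ω → E) [(span ℝ (Set.range τ)).HasOrthogonalProjection] (v : E) :
    (fun ξ => ⟪τ ξ, v⟫) ∈ span ℝ (Set.range fun a ξ => ⟪τ ξ, τ a⟫) := by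
  set K := span ℝ (Set.range τ)
  let L : E →ₗ[ℝ] Ω → ℝ := LinearMap.pi fun ξ => innerₗ E (τ ξ)
  have hL : L v = L (K.starProjection v) := by
    funext ξ
    have : ⟪v - K.starProjection v, τ ξ⟫ = 0 :=
      K.starProjection_inner_eq_zero v (τ ξ) (subset_span ⟨ξ, rfl⟩)
    simpa [L, inner_sub_right, real_inner_comm, sub_eq_zero] using this
  have hrange : Set.range (fun a ξ => ⟪τ ξ, τ a⟫) = L '' Set.range τ := by
    rw [← Set.range_comp]; rfl
  rw [hrange, ← map_span]
  change L v ∈ _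
  rw [hL]
  exact mem_map_of_mem (K.starProjection_apply_mem v)

theorem stmt19_general {Ω : Type*} (m : ℕ) (τ : Ω → (Fin m → ℝ)) (v : Fin m → ℝ) :
    (fun ξ => ∑ i, v i * τ ξ i) ∈
      Submodule.span ℝ (Set.range fun a : Ω => fun ξ : Ω => ∑ i, τ a i * τ ξ i) :=
  -- `⟪toLp 2 x, toLp 2 y⟫` is by definition `∑ i, y i * x i`
  inner_mem_span_range_inner (fun a => WithLp.toLp 2 (τ a) : Ω → EuclideanSpace ℝ (Fin m))
    (WithLp.toLp 2 v)

theorem stmt19 {Ω : Type*} (m : ℕ) (hm : 0 < m) (τ : Ω → (Fin m → ℝ)) (v : Fin m → ℝ) :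
    (fun ξ => ∑ i, v i * τ ξ i) ∈
      Submodule.span ℝ (Set.range fun a : Ω => fun ξ : Ω => ∑ i, τ a i * τ ξ i) :=
  stmt19_general m τ v
end
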